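/- arXiv:0712.3736 — 6 statements merged into one kernel-verified Lean document; each statement's English description precedes it below -/
import Mathlib

section
/- Let P be a finite subset of the Euclidean plane ℝ². Then P is collinear if and only if 𝒱^[n](P) = ∅ for every n ≥ 1 (equivalently, the Voronoi vertex set 𝒱(P) is empty if and only if P is collinear). -/
open Set

abbrev Plane : Type := EuclideanSpace ℝ (Fin 2)

/-- The Voronoi cell of a generator `p` for a generating set `P`. -/
def cell (P : Set Plane) (p : Plane) : Set Plane :=
  {x : Plane | ∀ q ∈ P, dist x p ≤ dist x q}

/-- The set of nearest generators of `x` in `P`. -/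
def nearest (P : Set Plane) (x : Plane) : Set Plane :=
  {p ∈ P | ∀ q ∈ P, dist x p ≤ dist x q}

/-- The Voronoi vertex set: points with at least 3 nearest generators. -/
def vtx (P : Set Plane) : Set Plane :=
  {x : Plane | 3 ≤ (nearest P x).encard}

/-- The boundary of a point set: its points on the frontier of its convex hull. -/
def Bd (S : Set Plane) : Set Plane :=
  S ∩ frontier (convexHull ℝ S)

/-- The number of instances of cocircularity. -/
noncomputable def Ic (P : Set Plane) : ℤ :=
  ∑ᶠ x ∈ vtx P, (((nearest P x).ncard : ℤ) - 3)

/-! If `P` is collinear, the nearest generators of any point lie on a line and on a circle around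
that point, so there are at most two of them. Conversely, let `p, q` be a closest pair of `P`: both
are nearest generators of their midpoint `m`. Moving `x` from `m` along the bisector of `pq`
towards a generator `r₀` off the line `pq`, the quantity `dist x r ^ 2 - dist x p ^ 2` is affine
in the displacement for every `r`, while `p` and `q` stay equidistant from `x`; the first time it
vanishes for some `r` on the side of `r₀`, the point `x` has the three nearest generators
`p, q, r`. -/

open scoped RealInnerProductSpace

theorem Set.Finite.exists_closest_pair {α : Type*} [PseudoMetricSpace α] {s : Set α}
    (hs : s.Finite) (hnt : s.Nontrivial) :
    ∃ p ∈ s, ∃ q ∈ s, p ≠ q ∧ ∀ r ∈ s, ∀ r' ∈ s, r ≠ r' → dist p q ≤ dist r r' := by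
  obtain ⟨⟨p, q⟩, ⟨hp, hq, hpq⟩, hmin⟩ :=
    exists_min_image s.offDiag (fun z => dist z.1 z.2) hs.offDiag (offDiag_nonempty.2 hnt)
  exact ⟨p, hp, q, hq, hpq, fun r hr r' hr' hrr' => hmin (r, r') ⟨hr, hr', hrr'⟩⟩

section InnerProductSpace

variable {E : Type*} [NormedAddCommGroup E] [InnerProductSpace ℝ E]

theorem dist_add_smul_sq_sub_dist_add_smul_sq (m u p r : E) (t : ℝ) :
    dist (m + t • u) r ^ 2 - dist (m + t • u) p ^ 2
      = dist m r ^ 2 - dist m p ^ 2 - t * (2 * ⟪u, r - p⟫) := by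
  simp only [dist_eq_norm, norm_sub_sq_real, inner_add_left, real_inner_smul_left,
    inner_sub_right]
  ring

theorem dist_add_smul_eq_of_inner_eq_zero {m u p q : E} (h : dist m q = dist m p)
    (hu : ⟪u, q - p⟫ = 0) (t : ℝ) : dist (m + t • u) q = dist (m + t • u) p := by
  have key := dist_add_smul_sq_sub_dist_add_smul_sq m u p q t
  rw [h, hu] at key
  exact (sq_eq_sq₀ dist_nonneg dist_nonneg).1 (by linarith)

theorem exists_inner_eq_zero_inner_pos_of_notMem_span {v w : E} (hw : w ∉ ℝ ∙ v) :
    ∃ u : E, ⟪u, v⟫ = 0 ∧ 0 < ⟪u, w⟫ := by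
  set K := ℝ ∙ v
  set u := w - K.starProjection w
  have hu : u ∈ Kᗮ := K.sub_starProjection_mem_orthogonal w
  have hu0 : u ≠ 0 := fun h => hw (K.starProjection_eq_self_iff.1 (sub_eq_zero.1 h).symm)
  refine ⟨u, K.inner_left_of_mem_orthogonal (Submodule.mem_span_singleton_self v) hu, ?_⟩
  have hw_eq : w = u + K.starProjection w := (sub_add_cancel _ _).symm
  have hproj : ⟪u, K.starProjection w⟫ = 0 :=
    K.inner_left_of_mem_orthogonal (K.starProjection_apply_mem w) hu
  rw [hw_eq, inner_add_right, hproj, add_zero, real_inner_self_eq_norm_sq]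
  exact pow_pos (norm_pos_iff.2 hu0) 2

theorem exists_inner_pos_of_not_collinear {P : Set E} (hP : ¬ Collinear ℝ P) {p : E}
    (hp : p ∈ P) (q : E) : ∃ r ∈ P, ∃ u : E, ⟪u, q - p⟫ = 0 ∧ 0 < ⟪u, r - p⟫ := by
  rw [collinear_iff_of_mem hp] at hP
  push Not at hP
  obtain ⟨r, hr, hr_off⟩ := hP (q - p)
  refine ⟨r, hr, exists_inner_eq_zero_inner_pos_of_notMem_span fun hmem => ?_⟩
  obtain ⟨t, ht⟩ := Submodule.mem_span_singleton.1 hmem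
  exact hr_off t (by rw [vadd_eq_add, ht, sub_add_cancel])

end InnerProductSpace

section Nearest

variable {P : Set Plane} {x p q r : Plane}

theorem dist_eq_of_mem_nearest (hp : p ∈ nearest P x) (hq : q ∈ nearest P x) :
    dist x p = dist x q :=
  le_antisymm (hp.2 q hq.1) (hq.2 p hp.1)

theorem mem_nearest_of_dist_eq (hp : p ∈ nearest P x) (hq : q ∈ P) (h : dist x q = dist x p) :
    q ∈ nearest P x :=
  ⟨hq, fun s hs => h ▸ hp.2 s hs⟩

theorem cospherical_nearest (P : Set Plane) (x : Plane) :
    EuclideanGeometry.Cospherical (nearest P x) := by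
  rcases (nearest P x).eq_empty_or_nonempty with h | ⟨p, hp⟩
  · rw [h]
    exact EuclideanGeometry.cospherical_empty
  · exact ⟨x, dist p x, fun q hq => by
      rw [dist_comm, dist_comm p]
      exact dist_eq_of_mem_nearest hq hp⟩

theorem mem_vtx_of_mem_nearest (hp : p ∈ nearest P x) (hq : q ∈ nearest P x)
    (hr : r ∈ nearest P x) (hpq : p ≠ q) (hpr : p ≠ r) (hqr : q ≠ r) : x ∈ vtx P :=
  (encard_eq_three.2 ⟨p, q, r, hpq, hpr, hqr, rfl⟩).symm.le.trans
    (encard_le_encard (insert_subset hp (insert_subset hq (singleton_subset_iff.2 hr))))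

theorem vtx_eq_empty_of_collinear (h : Collinear ℝ P) : vtx P = ∅ := by
  refine eq_empty_iff_forall_notMem.2 fun x hx => ?_
  obtain ⟨s, hs, hs3⟩ := exists_subset_encard_eq hx
  obtain ⟨a, b, c, hab, hac, hbc, rfl⟩ := encard_eq_three.1 hs3
  have hind := ((cospherical_nearest P x).subset hs).affineIndependent_of_ne hab hac hbc
  exact affineIndependent_iff_not_collinear_set.1 hind (h.subset fun y hy => (hs hy).1)

theorem left_mem_nearest_midpoint (hp : p ∈ P) (hmin : ∀ r ∈ P, r ≠ p → dist p q ≤ dist p r) :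
    p ∈ nearest P (midpoint ℝ p q) := by
  refine ⟨hp, fun r hr => ?_⟩
  rcases eq_or_ne r p with rfl | hrp
  · rfl
  have hpm : dist p (midpoint ℝ p q) = dist p q / 2 := by
    rw [dist_left_midpoint]
    simp [div_eq_inv_mul]
  have := dist_triangle p (midpoint ℝ p q) r
  have := hmin r hr hrp
  rw [dist_comm]
  linarith

theorem exists_mem_nearest_add_smul (hP : P.Finite) {m u r₀ : Plane} (hp : p ∈ nearest P m)
    (hr₀ : r₀ ∈ P) (hr₀u : 0 < ⟪u, r₀ - p⟫) :
    ∃ t : ℝ, ∃ r ∈ P, 0 < ⟪u, r - p⟫ ∧ p ∈ nearest P (m + t • u) ∧ r ∈ nearest P (m + t • u) := by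
  set α : Plane → ℝ := fun s => dist m s ^ 2 - dist m p ^ 2
  set β : Plane → ℝ := fun s => 2 * ⟪u, s - p⟫
  have hα : ∀ s ∈ P, 0 ≤ α s := fun s hs =>
    sub_nonneg.2 (pow_le_pow_left₀ dist_nonneg (hp.2 s hs) 2)
  obtain ⟨r, ⟨hr, hru⟩, hmin⟩ := exists_min_image {s ∈ P | 0 < ⟪u, s - p⟫}
    (fun s => α s / β s) (hP.subset (sep_subset _ _)) ⟨r₀, hr₀, hr₀u⟩
  have hβr : 0 < β r := by positivity
  set t := α r / β r
  have ht : 0 ≤ t := div_nonneg (hα r hr) hβr.le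
  have hpx : p ∈ nearest P (m + t • u) := by
    refine ⟨hp.1, fun s hs => ?_⟩
    rw [← sq_le_sq₀ dist_nonneg dist_nonneg, ← sub_nonneg,
      dist_add_smul_sq_sub_dist_add_smul_sq]
    rcases lt_or_ge 0 ⟪u, s - p⟫ with hsu | hsu
    · have := (le_div_iff₀ (by positivity)).1 (hmin s ⟨hs, hsu⟩)
      linarith
    · nlinarith [hα s hs]
  refine ⟨t, r, hr, hru, hpx, mem_nearest_of_dist_eq hpx hr ?_⟩
  rw [← sq_eq_sq₀ dist_nonneg dist_nonneg, ← sub_eq_zero,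
    dist_add_smul_sq_sub_dist_add_smul_sq]
  exact sub_eq_zero.2 (div_mul_cancel₀ _ hβr.ne').symm

theorem vtx_nonempty_of_not_collinear (hP : P.Finite) (h : ¬ Collinear ℝ P) :
    (vtx P).Nonempty := by
  have hnt : P.Nontrivial := by
    contrapose! h
    rcases h.eq_empty_or_singleton with rfl | ⟨a, rfl⟩
    exacts [collinear_empty ℝ Plane, collinear_singleton ℝ a]
  obtain ⟨p, hp, q, hq, hpq, hmin⟩ := hP.exists_closest_pair hnt
  have hpm : p ∈ nearest P (midpoint ℝ p q) :=
    left_mem_nearest_midpoint hp fun r hr hrp => hmin p hp r hr hrp.symm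
  have hqm : q ∈ nearest P (midpoint ℝ p q) := by
    rw [midpoint_comm]
    exact left_mem_nearest_midpoint hq fun r hr hrq => dist_comm p q ▸ hmin q hq r hr hrq.symm
  obtain ⟨r₀, hr₀, u, huq, hur₀⟩ := exists_inner_pos_of_not_collinear h hp q
  obtain ⟨t, r, hr, hur, hpx, hrx⟩ := exists_mem_nearest_add_smul hP hpm hr₀ hur₀
  have hqx : q ∈ nearest P (midpoint ℝ p q + t • u) := mem_nearest_of_dist_eq hpx hq
    (dist_add_smul_eq_of_inner_eq_zero (dist_eq_of_mem_nearest hpm hqm).symm huq t)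
  refine ⟨_, mem_vtx_of_mem_nearest hpx hqx hrx hpq ?_ ?_⟩
  · rintro rfl
    simp at hur
  · rintro rfl
    exact hur.ne' huq

end Nearest

theorem collinear_iff_vorIter_empty (P : Set Plane) (hP : P.Finite) :
    Collinear ℝ P ↔ ∀ n : ℕ, 1 ≤ n → vtx^[n] P = ∅ := by
  refine ⟨fun h n hn => ?_, fun h => ?_⟩
  · obtain ⟨k, rfl⟩ := Nat.exists_eq_add_of_le' hn
    rw [Function.iterate_succ_apply, vtx_eq_empty_of_collinear h,
      Function.iterate_fixed (vtx_eq_empty_of_collinear (collinear_empty ℝ Plane))]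
  · by_contra hcol
    exact (vtx_nonempty_of_not_collinear hP hcol).ne_empty (h 1 le_rfl)
end

section
/- Let P be a finite, non-collinear subset of the Euclidean plane ℝ², and let p, p' ∈ P be distinct points such that V_P(p) ∩ V_P(p') contains more than one point (i.e., e_{p,p'} is a Voronoi edge). Then V_P(p) ∩ V_P(p') is unbounded if and only if p and p' are neighbors on the boundary of P; equivalently, V_P(p) ∩ V_P(p') is bounded if and only if p and p' are not neighbors on the boundary of P. -/
open Set

/-- `p` and `p'` are neighbors on the boundary of `P`. -/
def Neighbors (P : Set Plane) (p p' : Plane) : Prop :=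
  p ≠ p' ∧ p ∈ Bd P ∧ p' ∈ Bd P ∧ segment ℝ p p' ⊆ frontier (convexHull ℝ P) ∧
    ∀ q ∈ P \ {p, p'}, q ∉ segment ℝ p p'

/-!
Every point of the edge `cell P p ∩ cell P p'` lies on the bisector of `p` and `p'`.
If the edge is unbounded, a limit direction `d` of its far-away points satisfies
`⟪d, q⟫ ≤ ⟪d, p⟫ = ⟪d, p'⟫` for all `q ∈ P`, so `[p, p']` lies on a supporting line of the hull;
a point of `P` strictly inside `[p, p']` would be strictly closer than `p` to any point of the edge.
Conversely, if `[p, p']` lies on the frontier of the hull, let `n` be an outer normal of a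
supporting line through its midpoint `m`. Along the ray `m + t • n`, points of `P` below that line
eventually fall behind `p` and `p'`, while those on it lie outside `[p, p']` (this is where the
plane is two-dimensional) and hence are no closer to `m` than `p`.
-/

open Filter Topology
open scoped RealInnerProductSpace

section InnerProductSpace

variable {E : Type*} [NormedAddCommGroup E] [InnerProductSpace ℝ E]

theorem dist_le_dist_iff_inner_le (x p q : E) :
    dist x p ≤ dist x q ↔ 2 * ⟪q - p, x⟫ ≤ ‖q‖ ^ 2 - ‖p‖ ^ 2 := by
  rw [← sq_le_sq₀ dist_nonneg dist_nonneg, dist_eq_norm, dist_eq_norm, norm_sub_sq_real,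
    norm_sub_sq_real, inner_sub_left, real_inner_comm q, real_inner_comm p]
  constructor <;> intro h <;> linarith

theorem exists_ne_zero_inner_nonpos_of_not_isBounded [FiniteDimensional ℝ E] {s : Set E}
    (hs : ¬Bornology.IsBounded s) :
    ∃ d : E, d ≠ 0 ∧ ∀ (a : E) (c : ℝ), (∀ x ∈ s, ⟪a, x⟫ ≤ c) → ⟪a, d⟫ ≤ 0 := by
  have hfar : ∀ k : ℕ, ∃ x ∈ s, (k : ℝ) < ‖x‖ := by
    intro k
    by_contra! h
    exact hs (isBounded_iff_forall_norm_le.2 ⟨k, h⟩)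
  choose x hxs hxk using hfar
  have hxpos (k : ℕ) : 0 < ‖x k‖ := k.cast_nonneg.trans_lt (hxk k)
  obtain ⟨d, hd, φ, hφ, hlim⟩ := (isCompact_sphere (0 : E) 1).tendsto_subseq
    (x := fun k => ‖x k‖⁻¹ • x k) (fun k => by simp [norm_smul, (hxpos k).ne'])
  refine ⟨d, ne_zero_of_mem_unit_sphere ⟨d, hd⟩, fun a c hac => ?_⟩
  have hinv : Tendsto (fun k => ‖x (φ k)‖⁻¹) atTop (𝓝 0) :=
    (tendsto_inv_atTop_zero.comp (tendsto_atTop_mono (fun k => (hxk k).le)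
      tendsto_natCast_atTop_atTop)).comp hφ.tendsto_atTop
  refine le_of_tendsto_of_tendsto' (((innerSL ℝ a).continuous.tendsto d).comp hlim)
    (by simpa using hinv.mul_const c) fun k => ?_
  simp only [Function.comp_apply, innerSL_apply_apply, inner_smul_right]
  exact mul_le_mul_of_nonneg_left (hac _ (hxs _)) (inv_nonneg.2 (norm_nonneg _))

theorem mem_frontier_of_inner_le {K : Set E} {d y : E} (hd : d ≠ 0)
    (hK : ∀ z ∈ K, ⟪d, z⟫ ≤ ⟪d, y⟫) (hy : y ∈ closure K) : y ∈ frontier K := by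
  refine ⟨hy, fun hint => ?_⟩
  have hopen := (innerSL ℝ d).isOpenMap_of_ne_zero (by simpa [← norm_eq_zero] using hd)
    (interior K) isOpen_interior
  have himage : innerSL ℝ d '' interior K ⊆ Iic ⟪d, y⟫ := by
    rintro _ ⟨z, hz, rfl⟩
    exact hK z (interior_subset hz)
  have := interior_maximal himage hopen (mem_image_of_mem _ hint)
  rw [interior_Iic, mem_Iio, innerSL_apply_apply] at this
  exact lt_irrefl _ this

theorem dist_lt_of_mem_segment [StrictConvexSpace ℝ E] {x p p' q : E} (hx : dist x p = dist x p')
    (hq : q ∈ segment ℝ p p') (hqp : q ≠ p) (hqp' : q ≠ p') : dist x q < dist x p := by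
  obtain ⟨a, b, ha, hb, hab, rfl⟩ := mem_openSegment_of_ne_left_right hqp.symm hqp'.symm hq
  have hsplit : x - (a • p + b • p') = a • (x - p) + b • (x - p') := by
    linear_combination (norm := module) -hab • x
  rw [dist_eq_norm, hsplit, dist_eq_norm]
  refine norm_combo_lt_of_ne le_rfl (by rw [← dist_eq_norm, ← dist_eq_norm, hx]) ?_ ha hb hab
  intro h
  apply hqp
  rw [← sub_right_inj.1 h, ← add_smul, hab, one_smul]

theorem exists_ne_zero_inner_le_of_notMem_interior [CompleteSpace E] {A : Set E} {x : E}
    (hA : Convex ℝ A) (hx : x ∉ interior A) (hAint : (interior A).Nonempty) :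
    ∃ n : E, n ≠ 0 ∧ ∀ a ∈ A, ⟪n, a⟫ ≤ ⟪n, x⟫ := by
  obtain ⟨f, hf, hfA⟩ := geometric_hahn_banach_of_nonempty_interior_point hA hx hAint
  refine ⟨(InnerProductSpace.toDual ℝ E).symm f, by simpa using hf, fun a ha => ?_⟩
  simpa only [InnerProductSpace.toDual_symm_apply] using hfA a ha

theorem exists_eq_lineMap_of_inner_eq [Fact (Module.finrank ℝ E = 2)] {n p p' q : E}
    (hn : n ≠ 0) (hne : p ≠ p') (hp' : ⟪n, p'⟫ = ⟪n, p⟫) (hq : ⟪n, q⟫ = ⟪n, p⟫) :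
    ∃ σ : ℝ, q = AffineMap.lineMap p p' σ := by
  obtain ⟨σ, hσ⟩ := Submodule.mem_span_singleton.1 <|
    Submodule.mem_span_singleton_of_inner_eq_zero_of_inner_eq_zero (𝕜 := ℝ) (u := q - p) hn
      (sub_ne_zero.2 hne.symm) (by simp [inner_sub_right, hq]) (by simp [inner_sub_right, hp'])
  refine ⟨σ, ?_⟩
  rw [AffineMap.lineMap_apply, vsub_eq_sub, vadd_eq_add, hσ, sub_add_cancel]

theorem dist_midpoint_le_dist_lineMap {p p' : E} {σ : ℝ}
    (hσ : AffineMap.lineMap p p' σ ∉ segment ℝ p p') :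
    dist (midpoint ℝ p p') p ≤ dist (midpoint ℝ p p') (AffineMap.lineMap p p' σ) := by
  rw [segment_eq_image_lineMap] at hσ
  have : σ ∉ Icc (0 : ℝ) 1 := fun h => hσ (mem_image_of_mem _ h)
  rw [midpoint, dist_lineMap_left, dist_lineMap_lineMap, Real.dist_eq]
  refine mul_le_mul_of_nonneg_right ?_ dist_nonneg
  rw [mem_Icc, not_and_or, not_le, not_le] at this
  rw [invOf_eq_inv, Real.norm_eq_abs, abs_of_pos (by norm_num), le_abs]
  rcases this with h | h
  · left; linarith
  · right; linarith

theorem eventually_dist_add_smul_le {x n r q : E} (hle : ⟪n, q⟫ ≤ ⟪n, r⟫)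
    (heq : ⟪n, q⟫ = ⟪n, r⟫ → dist x r ≤ dist x q) :
    ∀ᶠ t : ℝ in atTop, dist (x + t • n) r ≤ dist (x + t • n) q := by
  simp only [dist_le_dist_iff_inner_le, inner_add_right, inner_smul_right]
  have hslope : ⟪q - r, n⟫ = ⟪n, q⟫ - ⟪n, r⟫ := by rw [real_inner_comm, inner_sub_right]
  rcases hle.lt_or_eq with hlt | hparallel
  · have hlim : Tendsto (fun t : ℝ => 2 * (⟪q - r, x⟫ + t * ⟪q - r, n⟫)) atTop atBot :=
      (tendsto_atBot_add_const_left _ _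
        (tendsto_id.atTop_mul_const_of_neg (by linarith))).const_mul_atBot two_pos
    exact hlim.eventually_le_atBot _
  · refine Eventually.of_forall fun t => ?_
    have := (dist_le_dist_iff_inner_le x r q).1 (heq hparallel)
    rw [hslope, hparallel, sub_self, mul_zero, add_zero]
    exact this

theorem not_isBounded_of_eventually_add_smul_mem {s : Set E} {x n : E} (hn : n ≠ 0)
    (h : ∀ᶠ t : ℝ in atTop, x + t • n ∈ s) : ¬Bornology.IsBounded s := by
  intro hs
  obtain ⟨R, hR⟩ := ((innerSL ℝ n).lipschitz.isBounded_image hs).bddAbove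
  have hlim : Tendsto (fun t : ℝ => ⟪n, x + t • n⟫) atTop atTop := by
    simp only [inner_add_right, inner_smul_right, real_inner_self_eq_norm_sq]
    exact tendsto_atTop_add_const_left _ _ (tendsto_id.atTop_mul_const (by positivity))
  obtain ⟨t, hts, htR⟩ := (h.and (hlim.eventually_gt_atTop R)).exists
  exact (hR (mem_image_of_mem _ hts)).not_gt htR

theorem interior_convexHull_nonempty_of_not_collinear [Fact (Module.finrank ℝ E = 2)] {s : Set E}
    (hs : ¬Collinear ℝ s) : (interior (convexHull ℝ s)).Nonempty := by
  have : FiniteDimensional ℝ E := .of_fact_finrank_eq_two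
  have hne : s.Nonempty := nonempty_iff_ne_empty.2 fun h => hs (h ▸ collinear_empty ℝ E)
  rw [(convex_convexHull ℝ s).interior_nonempty_iff_affineSpan_eq_top, affineSpan_convexHull,
    AffineSubspace.affineSpan_eq_top_iff_vectorSpan_eq_top_of_nonempty ℝ E E hne]
  refine Submodule.eq_top_of_finrank_eq (le_antisymm (Submodule.finrank_le _) ?_)
  rw [collinear_iff_finrank_le_one, not_le] at hs
  rw [Fact.out (p := Module.finrank ℝ E = 2)]
  exact hs

end InnerProductSpace

instance : Fact (Module.finrank ℝ Plane = 2) := ⟨finrank_euclideanSpace_fin⟩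

theorem neighbors_of_inner_le {P : Set Plane} {p p' x d : Plane} (hp : p ∈ P) (hp' : p' ∈ P)
    (hne : p ≠ p') (hx : x ∈ cell P p ∩ cell P p') (hd : d ≠ 0)
    (hsupp : ∀ q ∈ P, ⟪d, q⟫ ≤ ⟪d, p⟫) (hpp' : ⟪d, p'⟫ = ⟪d, p⟫) : Neighbors P p p' := by
  have hhull : ∀ z ∈ convexHull ℝ P, ⟪d, z⟫ ≤ ⟪d, p⟫ := fun z hz =>
    convexHull_min hsupp (convex_halfSpace_le (innerₛₗ ℝ d).isLinear _) hz
  have hface : convexHull ℝ P ∩ {z | ⟪d, z⟫ = ⟪d, p⟫} ⊆ frontier (convexHull ℝ P) :=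
    fun z ⟨hz, hzd⟩ => mem_frontier_of_inner_le hd (hzd ▸ hhull) (subset_closure hz)
  have hpK : p ∈ convexHull ℝ P ∩ {z | ⟪d, z⟫ = ⟪d, p⟫} := ⟨subset_convexHull ℝ P hp, rfl⟩
  have hp'K : p' ∈ convexHull ℝ P ∩ {z | ⟪d, z⟫ = ⟪d, p⟫} := ⟨subset_convexHull ℝ P hp', hpp'⟩
  refine ⟨hne, ⟨hp, hface hpK⟩, ⟨hp', hface hp'K⟩, ?_, ?_⟩
  · have hconv := (convex_convexHull ℝ P).inter (convex_hyperplane (innerₛₗ ℝ d).isLinear ⟪d, p⟫)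
    exact (hconv.segment_subset hpK hp'K).trans hface
  · rintro q ⟨hq, hqpp'⟩ hqs
    simp only [mem_insert_iff, mem_singleton_iff, not_or] at hqpp'
    have hxpp' : dist x p = dist x p' := le_antisymm (hx.1 p' hp') (hx.2 p hp)
    exact (dist_lt_of_mem_segment hxpp' hqs hqpp'.1 hqpp'.2).not_ge (hx.1 q hq)

theorem neighbors_of_not_isBounded {P : Set Plane} {p p' : Plane} (hp : p ∈ P) (hp' : p' ∈ P)
    (hne : p ≠ p') (h : ¬Bornology.IsBounded (cell P p ∩ cell P p')) : Neighbors P p p' := by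
  obtain ⟨x, hx⟩ : (cell P p ∩ cell P p').Nonempty :=
    nonempty_iff_ne_empty.2 fun h' => h (h' ▸ Bornology.isBounded_empty)
  obtain ⟨d, hd, hrec⟩ := exists_ne_zero_inner_nonpos_of_not_isBounded h
  have hsupp {r : Plane} (hr : cell P p ∩ cell P p' ⊆ cell P r) : ∀ q ∈ P, ⟪d, q⟫ ≤ ⟪d, r⟫ := by
    intro q hq
    have := hrec (q - r) _ fun y hy =>
      le_div_iff₀' two_pos |>.2 <| (dist_le_dist_iff_inner_le y r q).1 (hr hy q hq)
    rwa [inner_sub_left, real_inner_comm d q, real_inner_comm d r, sub_nonpos] at this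
  exact neighbors_of_inner_le hp hp' hne hx hd (hsupp inter_subset_left)
    (le_antisymm (hsupp inter_subset_left p' hp') (hsupp inter_subset_right p hp))

theorem not_isBounded_of_neighbors {P : Set Plane} (hP : P.Finite) (hcol : ¬Collinear ℝ P)
    {p p' : Plane} (hN : Neighbors P p p') : ¬Bornology.IsBounded (cell P p ∩ cell P p') := by
  obtain ⟨hne, ⟨hp, -⟩, ⟨hp', -⟩, hseg, hgap⟩ := hN
  obtain ⟨n, hn, hsupp⟩ := exists_ne_zero_inner_le_of_notMem_interior (convex_convexHull ℝ P)
    (hseg (midpoint_mem_segment p p')).2 (interior_convexHull_nonempty_of_not_collinear hcol)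
  set m := midpoint ℝ p p' with hm
  have hnm : ⟪n, m⟫ = (⟪n, p⟫ + ⟪n, p'⟫) / 2 := by
    rw [hm, midpoint_eq_smul_add, inner_smul_right, inner_add_right, invOf_eq_inv]; ring
  have hnp := hsupp p (subset_convexHull ℝ P hp)
  have hnp' := hsupp p' (subset_convexHull ℝ P hp')
  have hnpm : ⟪n, p⟫ = ⟪n, m⟫ := by linarith
  have hnp'p : ⟪n, p'⟫ = ⟪n, p⟫ := by linarith
  have hmp' : dist m p' = dist m p := by rw [dist_midpoint_left, dist_midpoint_right, dist_comm]
  have hface {q : Plane} (hq : q ∈ P) (hqn : ⟪n, q⟫ = ⟪n, p⟫) : dist m p ≤ dist m q := by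
    by_cases hqs : q ∈ segment ℝ p p'
    · obtain rfl | rfl : q = p ∨ q = p' := by
        by_contra! h
        exact hgap q ⟨hq, by simp [h.1, h.2]⟩ hqs
      · exact le_rfl
      · exact hmp'.ge
    · obtain ⟨σ, rfl⟩ := exists_eq_lineMap_of_inner_eq hn hne hnp'p hqn
      exact dist_midpoint_le_dist_lineMap hqs
  have hray {r : Plane} (hnr : ⟪n, r⟫ = ⟪n, p⟫) (hmr : dist m r = dist m p) :
      ∀ᶠ t : ℝ in atTop, m + t • n ∈ cell P r := by
    refine (eventually_all_finite hP).2 fun q hq => eventually_dist_add_smul_le ?_ ?_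
    · rw [hnr, hnpm]
      exact hsupp q (subset_convexHull ℝ P hq)
    · intro hqr
      rw [hmr]
      exact hface hq (hqr.trans hnr)
  exact not_isBounded_of_eventually_add_smul_mem hn ((hray rfl rfl).and (hray hnp'p hmp'))

theorem edge_unbounded_iff_neighbors_general (P : Set Plane) (hP : P.Finite)
    (hcol : ¬ Collinear ℝ P) (p p' : Plane) (hp : p ∈ P) (hp' : p' ∈ P) (hne : p ≠ p') :
    (¬ Bornology.IsBounded (cell P p ∩ cell P p') ↔ Neighbors P p p') ∧
    (Bornology.IsBounded (cell P p ∩ cell P p') ↔ ¬ Neighbors P p p') := by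
  have h : ¬Bornology.IsBounded (cell P p ∩ cell P p') ↔ Neighbors P p p' :=
    ⟨neighbors_of_not_isBounded hp hp' hne, not_isBounded_of_neighbors hP hcol⟩
  exact ⟨h, by rw [← h, not_not]⟩

theorem edge_unbounded_iff_neighbors (P : Set Plane) (hP : P.Finite)
    (hcol : ¬ Collinear ℝ P) (p p' : Plane) (hp : p ∈ P) (hp' : p' ∈ P) (hne : p ≠ p')
    (hedge : (cell P p ∩ cell P p').Nontrivial) :
    (¬ Bornology.IsBounded (cell P p ∩ cell P p') ↔ Neighbors P p p') ∧
    (Bornology.IsBounded (cell P p ∩ cell P p') ↔ ¬ Neighbors P p p') :=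
  edge_unbounded_iff_neighbors_general P hP hcol p p' hp hp' hne
end

section
/- Let P be a finite subset of the Euclidean plane ℝ² with P.ncard = 5. Then either there exists n ≥ 1 with 𝒱^[n](P) = ∅, or (𝒱^[n](P)).ncard = 5 for every n ≥ 0. -/
/-!
Each Voronoi vertex `x` of a finite `Q ⊆ ℝ²` with `k ≥ 3` points has three nearest generators,
and they determine `x` (two circles meet in at most two points). Double count pairs of
generators: a pair `{a, b}` is nearest to at most two vertices, since such vertices lie on the
perpendicular bisector of `ab` and the middle one of three would have a third nearest generator
that is strictly farther from the outer two, contradicting convexity of half-planes; and to at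
most one vertex when `a, b` lie on a supporting line of `Q`, which holds for at least three pairs.
Hence `3 |𝒱(Q)| + 3 ≤ k (k - 1)`, i.e. `|𝒱(Q)| ≤ 1, 3, 5` for `k = 3, 4, 5`, while `𝒱(Q) = ∅`
for `k ≤ 2`. So the iteration dies out once it has at most four points, and a five-point set
either keeps five points forever or dies.
-/

open Set

open Module EuclideanGeometry AffineSubspace Finset
open scoped RealInnerProductSpace Pointwise

section Geometry

variable {V : Type*} [NormedAddCommGroup V] [InnerProductSpace ℝ V]

theorem dist_sq_sub_dist_sq_sub (x y a c : V) :
    (dist y c ^ 2 - dist y a ^ 2) - (dist x c ^ 2 - dist x a ^ 2) = 2 * ⟪y - x, a - c⟫ := by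
  simp only [dist_eq_norm, @norm_sub_sq_real V, inner_sub_left, inner_sub_right]
  ring

theorem inner_sub_sub_neg_of_dist_eq_of_dist_lt {x y a c : V} (hx : dist x a = dist x c)
    (hy : dist y a < dist y c) : ⟪y - x, c - a⟫ < 0 := by
  have := dist_sq_sub_dist_sq_sub x y a c
  rw [← neg_sub c a, inner_neg_right, hx] at this
  nlinarith [dist_nonneg (x := y) (y := a)]

theorem Wbtw.dist_lt_dist {p m q a c : V} (hm : Wbtw ℝ p m q) (hp : dist p a < dist p c)
    (hq : dist q a < dist q c) : dist m a < dist m c := by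
  obtain ⟨t, ⟨ht0, ht1⟩, rfl⟩ := hm
  have hpq := dist_sq_sub_dist_sq_sub p q a c
  have hpm := dist_sq_sub_dist_sq_sub p (AffineMap.lineMap p q t) a c
  rw [AffineMap.lineMap_apply_module', add_sub_cancel_right, real_inner_smul_left] at hpm
  rw [AffineMap.lineMap_apply_module']
  have hp' : dist p a ^ 2 < dist p c ^ 2 := by gcongr
  have hq' : dist q a ^ 2 < dist q c ^ 2 := by gcongr
  refine lt_of_pow_lt_pow_left₀ 2 dist_nonneg ?_
  rcases le_total (dist p c ^ 2 - dist p a ^ 2) (dist q c ^ 2 - dist q a ^ 2) with h | h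
  · nlinarith [mul_nonneg ht0 (sub_nonneg.2 h)]
  · nlinarith [mul_nonneg (sub_nonneg.2 ht1) (sub_nonneg.2 h)]

def OnSupportLine (Q s : Set V) : Prop :=
  ∃ w : V, w ≠ 0 ∧ ∃ r : ℝ, (∀ p ∈ s, ⟪w, p⟫ = r) ∧ ∀ q ∈ Q, ⟪w, q⟫ ≤ r

theorem OnSupportLine.of_neg {Q s : Set V} (h : OnSupportLine (-Q) s) : OnSupportLine Q (-s) := by
  obtain ⟨w, hw, r, hs, hQ⟩ := h
  refine ⟨-w, neg_ne_zero.2 hw, r, fun p hp => ?_, fun q hq => ?_⟩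
  · rw [inner_neg_left, ← inner_neg_right]
    exact hs _ hp
  · rw [inner_neg_left, ← inner_neg_right]
    exact hQ _ (Set.neg_mem_neg.2 hq)

variable [Fact (finrank ℝ V = 2)]

theorem eq_of_dist_eq_of_dist_eq_of_dist_eq {x y a b c : V} (hab : a ≠ b) (hac : a ≠ c)
    (hbc : b ≠ c) (hxb : dist x a = dist x b) (hxc : dist x a = dist x c)
    (hyb : dist y a = dist y b) (hyc : dist y a = dist y c) : x = y := by
  have : FiniteDimensional ℝ V := .of_fact_finrank_eq_two
  simp only [dist_comm x, dist_comm y] at hxb hxc hyb hyc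
  by_contra hxy
  rcases eq_of_dist_eq_of_dist_eq_of_finrank_eq_two Fact.out hxy hab rfl hxb.symm hxc.symm
    rfl hyb.symm hyc.symm with h | h
  exacts [hac h.symm, hbc h.symm]

theorem collinear_of_forall_dist_eq {a b : V} (hab : a ≠ b) {s : Set V}
    (hs : ∀ x ∈ s, dist x a = dist x b) : Collinear ℝ s := by
  have : FiniteDimensional ℝ V := .of_fact_finrank_eq_two
  have hsub : vectorSpan ℝ s ≤ (perpBisector a b).direction := by
    rw [← direction_affineSpan]
    exact direction_le (affineSpan_le.mpr fun x hx => mem_perpBisector_iff_dist_eq.mpr (hs x hx))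
  rw [direction_perpBisector, vsub_eq_sub] at hsub
  rw [collinear_iff_finrank_le_one, ← Submodule.finrank_orthogonal_span_singleton (𝕜 := ℝ) (n := 1)
    (sub_ne_zero.mpr hab.symm)]
  exact Submodule.finrank_mono hsub

end Geometry

instance : Fact (finrank ℝ Plane = 2) := ⟨finrank_euclideanSpace_fin⟩

section Voronoi

variable {Q : Set Plane} {x y a b c : Plane}

theorem nearest_subset : nearest Q x ⊆ Q := fun _ hp => hp.1

theorem dist_eq_of_mem_nearest_s6 (ha : a ∈ nearest Q x) (hb : b ∈ nearest Q x) :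
    dist x a = dist x b :=
  (ha.2 b hb.1).antisymm (hb.2 a ha.1)

theorem dist_lt_of_notMem_nearest (ha : a ∈ nearest Q x) (hc : c ∈ Q) (hcx : c ∉ nearest Q x) :
    dist x a < dist x c :=
  (ha.2 c hc).lt_of_ne fun h => hcx ⟨hc, fun q hq => h ▸ ha.2 q hq⟩

theorem exists_mem_nearest_ne_ne (hx : x ∈ vtx Q) (a b : Plane) :
    ∃ c ∈ nearest Q x, c ≠ a ∧ c ≠ b := by
  have h2 : 1 < (nearest Q x \ {a}).encard :=
    calc (1 : ℕ∞) < 3 - 1 := by decide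
      _ ≤ (nearest Q x).encard - 1 := tsub_le_tsub_right hx 1
      _ ≤ _ := Set.encard_tsub_one_le_encard_sdiff_singleton _ a
  obtain ⟨c, ⟨hc, hca⟩, hcb⟩ := Set.exists_ne_of_one_lt_encard h2 b
  exact ⟨c, hc, hca, hcb⟩

theorem eq_of_mem_nearest_of_mem_nearest (hab : a ≠ b) (hac : a ≠ c) (hbc : b ≠ c)
    (hax : a ∈ nearest Q x) (hbx : b ∈ nearest Q x) (hcx : c ∈ nearest Q x)
    (hay : a ∈ nearest Q y) (hby : b ∈ nearest Q y) (hcy : c ∈ nearest Q y) : x = y :=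
  eq_of_dist_eq_of_dist_eq_of_dist_eq hab hac hbc (dist_eq_of_mem_nearest_s6 hax hbx)
    (dist_eq_of_mem_nearest_s6 hax hcx) (dist_eq_of_mem_nearest_s6 hay hby)
    (dist_eq_of_mem_nearest_s6 hay hcy)

theorem not_wbtw_of_mem_nearest {p m q : Plane} (hab : a ≠ b) (hpm : p ≠ m) (hmq : m ≠ q)
    (hmV : m ∈ vtx Q) (hap : a ∈ nearest Q p) (hbp : b ∈ nearest Q p) (ham : a ∈ nearest Q m)
    (hbm : b ∈ nearest Q m) (haq : a ∈ nearest Q q) (hbq : b ∈ nearest Q q) :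
    ¬Wbtw ℝ p m q := by
  intro hm
  obtain ⟨c, hcm, hca, hcb⟩ := exists_mem_nearest_ne_ne hmV a b
  have hc := nearest_subset hcm
  have hcp : c ∉ nearest Q p := fun h =>
    hpm (eq_of_mem_nearest_of_mem_nearest hab hca.symm hcb.symm hap hbp h ham hbm hcm)
  have hcq : c ∉ nearest Q q := fun h =>
    hmq (eq_of_mem_nearest_of_mem_nearest hab hca.symm hcb.symm ham hbm hcm haq hbq h)
  exact (hm.dist_lt_dist (dist_lt_of_notMem_nearest hap hc hcp)
    (dist_lt_of_notMem_nearest haq hc hcq)).ne (dist_eq_of_mem_nearest_s6 ham hcm)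

theorem card_le_two_of_forall_mem_nearest (hab : a ≠ b) {s : Finset Plane}
    (hs : ∀ x ∈ s, x ∈ vtx Q ∧ a ∈ nearest Q x ∧ b ∈ nearest Q x) : #s ≤ 2 := by
  by_contra! h
  obtain ⟨x, hx, y, hy, z, hz, hxy, hxz, hyz⟩ := two_lt_card.mp h
  obtain ⟨hxV, hax, hbx⟩ := hs x hx
  obtain ⟨hyV, hay, hby⟩ := hs y hy
  obtain ⟨hzV, haz, hbz⟩ := hs z hz
  have hcol : Collinear ℝ {x, y, z} := collinear_of_forall_dist_eq hab <| by
    simp only [Set.mem_insert_iff, Set.mem_singleton_iff, forall_eq_or_imp, forall_eq]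
    exact ⟨dist_eq_of_mem_nearest_s6 hax hbx, dist_eq_of_mem_nearest_s6 hay hby,
      dist_eq_of_mem_nearest_s6 haz hbz⟩
  rcases hcol.wbtw_or_wbtw_or_wbtw with h | h | h
  · exact not_wbtw_of_mem_nearest hab hxy hyz hyV hax hbx hay hby haz hbz h
  · exact not_wbtw_of_mem_nearest hab hyz hxz.symm hzV hay hby haz hbz hax hbx h
  · exact not_wbtw_of_mem_nearest hab hxz.symm hxy hxV haz hbz hax hbx hay hby h

theorem card_le_one_of_onSupportLine (hab : a ≠ b) (hsupp : OnSupportLine Q {a, b})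
    {s : Finset Plane} (hs : ∀ x ∈ s, x ∈ vtx Q ∧ a ∈ nearest Q x ∧ b ∈ nearest Q x) :
    #s ≤ 1 := by
  refine card_le_one.mpr fun x hx y hy => by_contra fun hxy => ?_
  obtain ⟨hxV, hax, hbx⟩ := hs x hx
  obtain ⟨hyV, hay, hby⟩ := hs y hy
  obtain ⟨w, hw, r, hwab, hwQ⟩ := hsupp
  have hw_perp : ⟪b - a, w⟫ = 0 := by
    rw [real_inner_comm, inner_sub_right, hwab b (by simp), hwab a (by simp), sub_self]
  have hxy_perp : ⟪b - a, y - x⟫ = 0 := by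
    have hx := dist_eq_of_mem_nearest_s6 hax hbx
    have hy := dist_eq_of_mem_nearest_s6 hay hby
    rw [dist_comm x, dist_comm x] at hx
    rw [dist_comm y, dist_comm y] at hy
    rw [real_inner_comm]
    exact inner_vsub_vsub_of_dist_eq_of_dist_eq hx hy
  obtain ⟨t, rfl⟩ := Submodule.mem_span_singleton.mp
    (Submodule.mem_span_singleton_of_inner_eq_zero_of_inner_eq_zero (sub_ne_zero.2 hab.symm)
      (sub_ne_zero.2 (Ne.symm hxy)) hw_perp hxy_perp)
  -- `w` is a multiple of `y - x`, but third nearest generators of `x` and of `y` lie strictly on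
  -- opposite sides of the line `ab` in that direction
  obtain ⟨c, hcx, hca, hcb⟩ := exists_mem_nearest_ne_ne hxV a b
  obtain ⟨d, hdy, hda, hdb⟩ := exists_mem_nearest_ne_ne hyV a b
  have hc : ⟪y - x, c - a⟫ < 0 := inner_sub_sub_neg_of_dist_eq_of_dist_lt
    (dist_eq_of_mem_nearest_s6 hax hcx) (dist_lt_of_notMem_nearest hay (nearest_subset hcx)
      fun h => hxy (eq_of_mem_nearest_of_mem_nearest hab hca.symm hcb.symm hax hbx hcx hay hby h))
  have hd : ⟪x - y, d - a⟫ < 0 := inner_sub_sub_neg_of_dist_eq_of_dist_lt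
    (dist_eq_of_mem_nearest_s6 hay hdy) (dist_lt_of_notMem_nearest hax (nearest_subset hdy)
      fun h => hxy (eq_of_mem_nearest_of_mem_nearest hab hda.symm hdb.symm hax hbx h hay hby hdy))
  have hwc := hwQ c (nearest_subset hcx)
  have hwd := hwQ d (nearest_subset hdy)
  rw [← hwab a (by simp)] at hwc hwd
  rw [← neg_sub y x, inner_neg_left] at hd
  simp only [real_inner_smul_left, inner_sub_right] at hwc hwd hc hd
  have ht : t = 0 := by nlinarith
  simp [ht] at hw

end Voronoi

def perpDot (u v : Plane) : ℝ := u 0 * v 1 - u 1 * v 0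

theorem perpDot_self (u : Plane) : perpDot u u = 0 := by
  unfold perpDot; ring

theorem perpDot_zero_right (u : Plane) : perpDot u 0 = 0 := by
  simp [perpDot]

theorem perpDot_neg_left (u v : Plane) : perpDot (-u) v = -perpDot u v := by
  simp only [perpDot, PiLp.neg_apply]; ring

theorem perpDot_anticomm (u v : Plane) : perpDot v u = -perpDot u v := by
  unfold perpDot; ring

theorem inner_rotate_eq_perpDot (d v : Plane) : ⟪!₂[-d 1, d 0], v⟫ = perpDot d v := by
  simp [PiLp.inner_apply, Fin.sum_univ_two, perpDot]
  ring

/-- On the closed right half-plane `v 1 / ‖v‖` is the sine of the direction angle of `v`, which it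
determines monotonically; so it orders directions the way the sign of `perpDot` does. -/
theorem perpDot_nonpos_of_div_norm_le {u v : Plane} (hu : u ≠ 0) (hv : v ≠ 0) (hu0 : 0 ≤ u 0)
    (hv0 : 0 ≤ v 0) (h : v 1 / ‖v‖ ≤ u 1 / ‖u‖) : perpDot u v ≤ 0 := by
  have hnu := norm_pos_iff.2 hu
  have hnv := norm_pos_iff.2 hv
  rw [div_le_div_iff₀ hnv hnu, ← sub_nonpos] at h
  have hu2 : ‖u‖ ^ 2 = u 0 ^ 2 + u 1 ^ 2 := by
    simp [EuclideanSpace.real_norm_sq_eq, Fin.sum_univ_two]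
  have hv2 : ‖v‖ ^ 2 = v 0 ^ 2 + v 1 ^ 2 := by
    simp [EuclideanSpace.real_norm_sq_eq, Fin.sum_univ_two]
  have key : (u 0 * v 1) ^ 2 - (u 1 * v 0) ^ 2 =
      (v 1 * ‖u‖ - u 1 * ‖v‖) * (v 1 * ‖u‖ + u 1 * ‖v‖) := by
    linear_combination u 1 ^ 2 * hv2 - v 1 ^ 2 * hu2
  unfold perpDot
  rcases le_or_gt (v 1) 0 with hv1 | hv1
  · rcases le_or_gt 0 (u 1) with hu1 | hu1
    · nlinarith [mul_nonneg hu0 (neg_nonneg.2 hv1), mul_nonneg hu1 hv0]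
    · have hsum : v 1 * ‖u‖ + u 1 * ‖v‖ < 0 := by nlinarith
      have := abs_le_of_sq_le_sq' (a := u 1 * v 0) (b := -(u 0 * v 1))
        (by nlinarith [mul_nonneg_of_nonpos_of_nonpos h hsum.le]) (by nlinarith)
      linarith [this.1]
  · have hu1 : 0 < u 1 := by nlinarith
    have hsum : 0 < v 1 * ‖u‖ + u 1 * ‖v‖ := by positivity
    have := abs_le_of_sq_le_sq' (a := u 0 * v 1) (b := u 1 * v 0)
      (by nlinarith [mul_nonpos_of_nonpos_of_nonneg h hsum.le]) (by positivity)
    linarith [this.2]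

section SupportLines

variable {Q : Set Plane} {a : Plane}

theorem onSupportLine_pair_of_perpDot {p d : Plane} (hd : d ≠ 0) (hp : perpDot d (p - a) = 0)
    (hQ : ∀ q ∈ Q, perpDot d (q - a) ≤ 0) : OnSupportLine Q {a, p} := by
  have hw : !₂[-d 1, d 0] ≠ 0 := fun h => hd <| by
    ext i
    fin_cases i
    · simpa using congrArg (· 1) h
    · simpa using congrArg (· 0) h
  refine ⟨_, hw, ⟪!₂[-d 1, d 0], a⟫, ?_, fun q hq => ?_⟩
  · simp only [Set.mem_insert_iff, Set.mem_singleton_iff, forall_eq_or_imp, forall_eq, true_and]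
    rw [← sub_eq_zero, ← inner_sub_right, inner_rotate_eq_perpDot, hp]
  · rw [← sub_nonpos, ← inner_sub_right, inner_rotate_eq_perpDot]
    exact hQ q hq

/-- Gift wrapping: seen from a leftmost point `a`, the points of extreme direction angle span
supporting lines through `a`. -/
theorem exists_perpDot_extremes (hQ : Q.Finite) (h2 : 1 < Q.ncard) (ha : a ∈ Q)
    (hmin : ∀ r ∈ Q, a 0 ≤ r 0) :
    ∃ p ∈ Q, ∃ p' ∈ Q, p ≠ a ∧ p' ≠ a ∧ (∀ q ∈ Q, perpDot (p - a) (q - a) ≤ 0) ∧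
      ∀ q ∈ Q, perpDot (q - a) (p' - a) ≤ 0 := by
  set R := hQ.toFinset.erase a
  have hR : R.Nonempty := by
    rw [← card_pos, card_erase_of_mem (hQ.mem_toFinset.2 ha), ← Set.ncard_eq_toFinset_card Q hQ]
    omega
  have hRQ : ∀ r, r ∈ R ↔ r ∈ Q ∧ r ≠ a := fun r => by simp [R, and_comm]
  have key : ∀ p ∈ R, ∀ q ∈ Q, (q ∈ R → (q - a) 1 / ‖q - a‖ ≤ (p - a) 1 / ‖p - a‖) →
      perpDot (p - a) (q - a) ≤ 0 := by
    intro p hp q hq h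
    rcases eq_or_ne q a with rfl | hqa
    · rw [sub_self, perpDot_zero_right]
    have hpQ := (hRQ p).1 hp
    exact perpDot_nonpos_of_div_norm_le (sub_ne_zero.2 hpQ.2) (sub_ne_zero.2 hqa)
      (by simpa using hmin p hpQ.1) (by simpa using hmin q hq) (h ((hRQ q).2 ⟨hq, hqa⟩))
  obtain ⟨p, hp, hpmax⟩ := R.exists_max_image (fun r => (r - a) 1 / ‖r - a‖) hR
  obtain ⟨p', hp', hp'min⟩ := R.exists_min_image (fun r => (r - a) 1 / ‖r - a‖) hR
  refine ⟨p, ((hRQ p).1 hp).1, p', ((hRQ p').1 hp').1, ((hRQ p).1 hp).2, ((hRQ p').1 hp').2,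
    fun q hq => key p hp q hq (hpmax q), fun q hq => ?_⟩
  rcases eq_or_ne q a with rfl | hqa
  · simp [perpDot]
  have hqR := (hRQ q).2 ⟨hq, hqa⟩
  exact key q hqR p' ((hRQ p').1 hp').1 fun _ => hp'min q hqR

theorem exists_onSupportLine_pairs (hQ : Q.Finite) (h3 : 3 ≤ Q.ncard) (ha : a ∈ Q)
    (hmin : ∀ r ∈ Q, a 0 ≤ r 0) :
    ∃ p ∈ Q, ∃ q ∈ Q, p ≠ q ∧ p ≠ a ∧ q ≠ a ∧
      OnSupportLine Q {a, p} ∧ OnSupportLine Q {a, q} := by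
  obtain ⟨p, hp, p', hp', hpa, hp'a, hmax, hmin'⟩ := exists_perpDot_extremes hQ (by omega) ha hmin
  have hpa' : p - a ≠ 0 := sub_ne_zero.2 hpa
  have hp_supp := onSupportLine_pair_of_perpDot hpa' (perpDot_self _) hmax
  by_cases hpp : p = p'
  · -- `Q` lies on a line through `a`
    obtain ⟨q, ⟨hq, hqa⟩, hqp⟩ := Set.exists_ne_of_one_lt_ncard
      (Set.ncard_sdiff_singleton_of_mem ha ▸ by omega : 1 < (Q \ {a}).ncard) p
    have hq0 : perpDot (p - a) (q - a) = 0 := by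
      refine le_antisymm (hmax q hq) ?_
      rw [← neg_nonpos, ← perpDot_anticomm, hpp]
      exact hmin' q hq
    exact ⟨p, hp, q, hq, Ne.symm hqp, hpa, hqa, hp_supp,
      onSupportLine_pair_of_perpDot hpa' hq0 hmax⟩
  · refine ⟨p, hp, p', hp', hpp, hpa, hp'a, hp_supp, onSupportLine_pair_of_perpDot
      (sub_ne_zero.2 hp'a.symm) (by rw [← neg_sub, perpDot_neg_left, perpDot_self, neg_zero])
      fun q hq => ?_⟩
    rw [← neg_sub, perpDot_neg_left, ← perpDot_anticomm]
    exact hmin' q hq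

theorem exists_onSupportLine_pair_ne (hQ : Q.Finite) (h3 : 3 ≤ Q.ncard) (ha : a ∈ Q)
    (hmin : ∀ r ∈ Q, a 0 ≤ r 0) :
    ∃ c ∈ Q, ∃ d ∈ Q, c ≠ d ∧ c ≠ a ∧ d ≠ a ∧ OnSupportLine Q {c, d} := by
  obtain ⟨b, hb, hmax⟩ := hQ.toFinset.exists_max_image (· 0) ⟨a, hQ.mem_toFinset.2 ha⟩
  simp only [Set.Finite.mem_toFinset] at hb hmax
  by_cases hab : b 0 = a 0
  · -- `Q` lies on a vertical line
    obtain ⟨c, d, ⟨hc, hca⟩, ⟨hd, hda⟩, hcd⟩ := (Set.one_lt_ncard_iff hQ.sdiff).1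
      (Set.ncard_sdiff_singleton_of_mem ha ▸ by omega : 1 < (Q \ {a}).ncard)
    refine ⟨c, hc, d, hd, hcd, hca, hda, EuclideanSpace.single 0 1, by simp, a 0, ?_, ?_⟩
    · simp only [Set.mem_insert_iff, Set.mem_singleton_iff, forall_eq_or_imp, forall_eq,
        EuclideanSpace.inner_single_left, map_one, one_mul]
      exact ⟨le_antisymm (hab ▸ hmax c hc) (hmin c hc), le_antisymm (hab ▸ hmax d hd) (hmin d hd)⟩
    · intro r hr
      simpa only [EuclideanSpace.inner_single_left, map_one, one_mul, hab] using hmax r hr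
  · -- the rightmost point `b` of `Q` is the leftmost point of `-Q`
    obtain ⟨p, hp, q, hq, hpq, hpb, hqb, hbp, hbq⟩ := exists_onSupportLine_pairs (a := -b) hQ.neg
      (by rwa [Set.ncard_neg]) (Set.neg_mem_neg.2 hb) fun r hr => by
        simpa using neg_le_neg (hmax _ (Set.mem_neg.1 hr))
    have hba : b ≠ a := fun h => hab (h ▸ rfl)
    have hneg : ∀ {r : Plane}, OnSupportLine (-Q) {-b, r} → OnSupportLine Q {b, -r} :=
      fun h => by simpa [Set.neg_insert] using h.of_neg
    rcases eq_or_ne (-p) a with hpa | hpa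
    · exact ⟨b, hb, -q, Set.mem_neg.1 hq, fun h => hqb (by rw [h, neg_neg]), hba,
        fun h => hpq (neg_injective (hpa.trans h.symm)), hneg hbq⟩
    · exact ⟨b, hb, -p, Set.mem_neg.1 hp, fun h => hpb (by rw [h, neg_neg]), hba, hpa,
        hneg hbp⟩

open Classical in
theorem three_le_card_onSupportLine_pairs (hQ : Q.Finite) (h3 : 3 ≤ Q.ncard) :
    3 ≤ #((hQ.toFinset.powersetCard 2).filter fun e : Finset Plane => OnSupportLine Q ↑e) := by
  have hne : hQ.toFinset.Nonempty := by
    rw [← card_pos, ← Set.ncard_eq_toFinset_card Q hQ]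
    omega
  obtain ⟨a, ha, hmin⟩ := hQ.toFinset.exists_min_image (· 0) hne
  simp only [Set.Finite.mem_toFinset] at ha hmin
  obtain ⟨p, hp, q, hq, hpq, hpa, hqa, hap, haq⟩ := exists_onSupportLine_pairs hQ h3 ha hmin
  obtain ⟨c, hc, d, hd, hcd, hca, hda, hcd'⟩ := exists_onSupportLine_pair_ne hQ h3 ha hmin
  have hmem : ∀ x ∈ Q, ∀ y ∈ Q, x ≠ y → ({x, y} : Finset Plane) ∈ hQ.toFinset.powersetCard 2 :=
    fun x hx y hy hxy => by simp [card_pair hxy, Set.insert_subset_iff, hx, hy]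
  have hqap : q ∉ ({a, p} : Finset Plane) := by simp [hqa, hpq.symm]
  have hacd : a ∉ ({c, d} : Finset Plane) := by simp [hca.symm, hda.symm]
  refine two_lt_card.2 ⟨{a, p}, mem_filter.2 ⟨hmem a ha p hp hpa.symm, by simpa⟩,
    {a, q}, mem_filter.2 ⟨hmem a ha q hq hqa.symm, by simpa⟩,
    {c, d}, mem_filter.2 ⟨hmem c hc d hd hcd, by simpa⟩,
    fun h => hqap (h ▸ by simp), fun h => hacd (h ▸ by simp), fun h => hacd (h ▸ by simp)⟩

end SupportLines

section Counting

variable {Q : Set Plane}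

theorem exists_finset_subset_nearest {x : Plane} (hx : x ∈ vtx Q) :
    ∃ t : Finset Plane, ↑t ⊆ nearest Q x ∧ #t = 3 := by
  obtain ⟨t, hts, htc⟩ := Set.exists_subset_encard_eq hx
  obtain ⟨t, rfl⟩ := (Set.finite_of_encard_eq_coe htc).exists_finset_coe
  exact ⟨t, hts, by exact_mod_cast (Set.encard_coe_eq_coe_finsetCard t).symm.trans htc⟩

theorem vtx_finite (hQ : Q.Finite) : (vtx Q).Finite := by
  choose! T hTsub hTcard using fun x (hx : x ∈ vtx Q) => exists_finset_subset_nearest hx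
  refine Set.Finite.of_finite_image (f := T) ((hQ.toFinset.powersetCard 3).finite_toSet.subset ?_)
    fun x hx y hy hxy => ?_
  · rintro _ ⟨x, hx, rfl⟩
    simp only [mem_coe, mem_powersetCard, hTcard x hx, and_true]
    exact fun p hp => hQ.mem_toFinset.2 (nearest_subset (hTsub x hx hp))
  · obtain ⟨a, ha, b, hb, c, hc, hab, hac, hbc⟩ := two_lt_card.1 (by rw [hTcard x hx]; norm_num)
    have hy' : ∀ p ∈ T x, p ∈ nearest Q y := fun p hp => hTsub y hy (hxy ▸ hp)
    exact eq_of_mem_nearest_of_mem_nearest hab hac hbc (hTsub x hx ha) (hTsub x hx hb)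
      (hTsub x hx hc) (hy' a ha) (hy' b hb) (hy' c hc)

open Classical in
theorem three_mul_ncard_vtx_add_three_le (hQ : Q.Finite) (h3 : 3 ≤ Q.ncard) :
    3 * (vtx Q).ncard + 3 ≤ 2 * Q.ncard.choose 2 := by
  choose! T hTsub hTcard using fun x (hx : x ∈ vtx Q) => exists_finset_subset_nearest hx
  have hV := vtx_finite hQ
  have h3pairs := three_le_card_onSupportLine_pairs hQ h3
  set pairs := hQ.toFinset.powersetCard 2
  let r : Plane → Finset Plane → Prop := fun x e => e ⊆ T x
  have habove : ∀ x ∈ hV.toFinset, #(pairs.bipartiteAbove r x) = 3 := by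
    intro x hx
    rw [Set.Finite.mem_toFinset] at hx
    have : pairs.bipartiteAbove r x = (T x).powersetCard 2 := by
      ext e
      simp only [bipartiteAbove, pairs, r, mem_filter, mem_powersetCard]
      refine ⟨fun h => ⟨h.2, h.1.2⟩, fun h => ⟨⟨fun p hp => ?_, h.2⟩, h.1⟩⟩
      exact hQ.mem_toFinset.2 (nearest_subset (hTsub x hx (h.1 hp)))
    rw [this, card_powersetCard, hTcard x hx]
    rfl
  have hbelow : ∀ e ∈ pairs,
      #(hV.toFinset.bipartiteBelow r e) + (if OnSupportLine Q ↑e then 1 else 0) ≤ 2 := by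
    intro e he
    obtain ⟨a, b, hab, rfl⟩ := card_eq_two.1 (mem_powersetCard.1 he).2
    have hs : ∀ x ∈ hV.toFinset.bipartiteBelow r {a, b},
        x ∈ vtx Q ∧ a ∈ nearest Q x ∧ b ∈ nearest Q x := by
      intro x hx
      simp only [bipartiteBelow, r, mem_filter, Set.Finite.mem_toFinset,
        Finset.insert_subset_iff, Finset.singleton_subset_iff] at hx
      exact ⟨hx.1, hTsub x hx.1 hx.2.1, hTsub x hx.1 hx.2.2⟩
    split_ifs with hsupp
    · have := card_le_one_of_onSupportLine hab (by simpa using hsupp) hs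
      omega
    · simpa using card_le_two_of_forall_mem_nearest hab hs
  have hsum := sum_le_sum hbelow
  rw [sum_add_distrib, ← sum_card_bipartiteAbove_eq_sum_card_bipartiteBelow, sum_congr rfl habove,
    ← card_filter, sum_const, sum_const, smul_eq_mul, smul_eq_mul] at hsum
  rw [card_powersetCard, ← Set.ncard_eq_toFinset_card Q hQ] at hsum
  rw [Set.ncard_eq_toFinset_card _ hV]
  omega

end Counting

section Iteration

variable {Q : Set Plane}

theorem vtx_eq_empty_of_ncard_le_two (hQ : Q.Finite) (h : Q.ncard ≤ 2) : vtx Q = ∅ := by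
  refine Set.eq_empty_of_forall_notMem fun x (hx : 3 ≤ (nearest Q x).encard) => ?_
  have : (nearest Q x).encard ≤ 2 :=
    (Set.encard_mono nearest_subset).trans (hQ.cast_ncard_eq ▸ by exact_mod_cast h)
  exact absurd (hx.trans this) (by decide)

theorem ncard_vtx_lt (hQ : Q.Finite) (h3 : 3 ≤ Q.ncard) (h4 : Q.ncard ≤ 4) :
    (vtx Q).ncard < Q.ncard := by
  have := three_mul_ncard_vtx_add_three_le hQ h3
  interval_cases Q.ncard <;> simp [Nat.choose] at this <;> omega

theorem ncard_vtx_le_five (hQ : Q.Finite) (h : Q.ncard = 5) : (vtx Q).ncard ≤ 5 := by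
  have := three_mul_ncard_vtx_add_three_le hQ (by omega)
  rw [h, show Nat.choose 5 2 = 10 by rfl] at this
  omega

theorem exists_iterate_vtx_eq_empty (hQ : Q.Finite) (h : Q.ncard ≤ 4) :
    ∃ m, 1 ≤ m ∧ vtx^[m] Q = ∅ := by
  induction hn : Q.ncard using Nat.strong_induction_on generalizing Q with
  | _ n ih =>
  rcases le_or_gt n 2 with h2 | h3
  · exact ⟨1, le_rfl, vtx_eq_empty_of_ncard_le_two hQ (hn ▸ h2)⟩
  · have hlt := ncard_vtx_lt hQ (by omega) (by omega)
    obtain ⟨m, hm, hm'⟩ := ih _ (hn ▸ hlt) (vtx_finite hQ) (by omega) rfl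
    exact ⟨m + 1, by omega, by rwa [Function.iterate_succ_apply]⟩

end Iteration

theorem five_point_dichotomy (P : Set Plane) (hP : P.Finite) (h : P.ncard = 5) :
    (∃ n : ℕ, 1 ≤ n ∧ vtx^[n] P = ∅) ∨ (∀ n : ℕ, (vtx^[n] P).ncard = 5) := by
  refine or_iff_not_imp_left.2 fun hlive => ?_
  suffices ∀ n, (vtx^[n] P).Finite ∧ (vtx^[n] P).ncard = 5 from fun n => (this n).2
  intro n
  induction n with
  | zero => exact ⟨hP, h⟩
  | succ n ih =>
    rw [Function.iterate_succ_apply']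
    refine ⟨vtx_finite ih.1, le_antisymm (ncard_vtx_le_five ih.1 ih.2) (not_lt.1 fun hlt => ?_)⟩
    obtain ⟨m, hm, hempty⟩ := exists_iterate_vtx_eq_empty (vtx_finite ih.1) (by omega)
    exact hlive ⟨m + (n + 1), by omega,
      by rw [Function.iterate_add_apply, Function.iterate_succ_apply', hempty]⟩
end

section
/- Let P be a finite subset of the Euclidean plane ℝ². If (𝒱(P)).ncard > P.ncard, then P.ncard > 5. -/
open Set

/-!
Every Voronoi vertex `x` has three nearest generators `a, b, c` in counterclockwise order, so
the ordered pairs `(a, b), (b, c), (c, a)` are darts at `x`: pairs of nearest generators of `x`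
with a third one strictly to their left. A dart determines its vertex, because two empty circles
through `u` and `v` that both reach points on the left of `uv` coincide. No dart is a hull edge
(an ordered pair with all of `P` weakly on its right), and a non-collinear `P` has at least three
hull edges. Hence `3 |𝒱(P)| + 3 ≤ n (n - 1)` for `n = |P|`, which together with `|𝒱(P)| > n`
forces `n > 5`.
-/

open scoped InnerProductSpace

theorem inner_sub_pos_of_dist_le {E : Type*} [NormedAddCommGroup E] [InnerProductSpace ℝ E]
    {o p r : E} (hr : dist o r ≤ dist o p) (hrp : r ≠ p) : 0 < ⟪o - p, r - p⟫_ℝ := by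
  have hsq : ‖(p - o) + (r - p)‖ ^ 2 ≤ ‖p - o‖ ^ 2 := by
    rw [sub_add_sub_cancel', ← dist_eq_norm, ← dist_eq_norm, dist_comm r, dist_comm p]
    exact pow_le_pow_left₀ dist_nonneg hr 2
  have hrp' : 0 < ‖r - p‖ := norm_pos_iff.2 (sub_ne_zero.2 hrp)
  rw [norm_add_sq_real] at hsq
  rw [← neg_sub, inner_neg_left]
  nlinarith

namespace Plane

/-- Twice the signed area of the triangle `pqr`: positive iff `r` lies strictly to the left of the
line from `p` to `q`. -/
def orient (p q r : Plane) : ℝ :=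
  (q 0 - p 0) * (r 1 - p 1) - (q 1 - p 1) * (r 0 - p 0)

lemma orient_rotate (p q r : Plane) : orient q r p = orient p q r := by
  unfold orient; ring

lemma orient_swap_left (p q r : Plane) : orient q p r = -orient p q r := by
  unfold orient; ring

lemma orient_swap_right (p q r : Plane) : orient p r q = -orient p q r := by
  unfold orient; ring

@[simp]
lemma orient_self_left (p r : Plane) : orient p p r = 0 := by
  unfold orient; ring

@[simp]
lemma orient_self_right (p q : Plane) : orient p q p = 0 := by
  unfold orient; ring

lemma ne_of_orient_ne_zero {a b c : Plane} (h : orient a b c ≠ 0) : a ≠ b ∧ a ≠ c ∧ b ≠ c := by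
  refine ⟨?_, ?_, ?_⟩ <;> rintro rfl <;> apply h <;> unfold orient <;> ring

lemma ext_coords {x y : Plane} (h0 : x 0 = y 0) (h1 : x 1 = y 1) : x = y := by
  ext i; fin_cases i <;> assumption

lemma dist_sq_eq (x y : Plane) : dist x y ^ 2 = (x 0 - y 0) ^ 2 + (x 1 - y 1) ^ 2 := by
  simp only [EuclideanSpace.dist_eq, Fin.sum_univ_two, Real.dist_eq, sq_abs]
  exact Real.sq_sqrt (by positivity)

lemma inner_eq (u v : Plane) : ⟪u, v⟫_ℝ = u 0 * v 0 + u 1 * v 1 := by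
  simp only [PiLp.inner_apply, Fin.sum_univ_two, RCLike.inner_apply, conj_trivial]
  ring

lemma sq_eq_of_dist_eq {x p q : Plane} (h : dist x p = dist x q) :
    (x 0 - p 0) ^ 2 + (x 1 - p 1) ^ 2 = (x 0 - q 0) ^ 2 + (x 1 - q 1) ^ 2 := by
  rw [← dist_sq_eq, ← dist_sq_eq, h]

lemma sq_le_of_dist_le {x p q : Plane} (h : dist x p ≤ dist x q) :
    (x 0 - p 0) ^ 2 + (x 1 - p 1) ^ 2 ≤ (x 0 - q 0) ^ 2 + (x 1 - q 1) ^ 2 := by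
  rw [← dist_sq_eq, ← dist_sq_eq]
  exact pow_le_pow_left₀ dist_nonneg h 2

lemma orient_ne_zero_of_dist_eq {x a b c : Plane} (hab : a ≠ b) (hac : a ≠ c) (hbc : b ≠ c)
    (hb : dist x a = dist x b) (hc : dist x a = dist x c) : orient a b c ≠ 0 := by
  intro h
  have hb' := sq_eq_of_dist_eq hb
  have hc' := sq_eq_of_dist_eq hc
  have hu := pow_pos (dist_pos.2 hab.symm) 2
  have hv := pow_pos (dist_pos.2 hac.symm) 2
  rw [dist_sq_eq] at hu hv
  unfold orient at h
  -- with `u = b - a`, `v = c - a`, collinearity gives `|u|² (|v|² - u⬝v) = 0 = |v|² (|u|² - u⬝v)`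
  have huv : ((b 0 - a 0) ^ 2 + (b 1 - a 1) ^ 2) * ((c 0 - a 0) ^ 2 + (c 1 - a 1) ^ 2
      - ((b 0 - a 0) * (c 0 - a 0) + (b 1 - a 1) * (c 1 - a 1))) = 0 := by
    linear_combination ((b 0 - a 0) * (c 0 - a 0) + (b 1 - a 1) * (c 1 - a 1)) * hb'
      - ((b 0 - a 0) ^ 2 + (b 1 - a 1) ^ 2) * hc'
      + 2 * ((b 0 - a 0) * (x 1 - a 1) - (b 1 - a 1) * (x 0 - a 0)) * h
  have hvu : ((c 0 - a 0) ^ 2 + (c 1 - a 1) ^ 2) * ((b 0 - a 0) ^ 2 + (b 1 - a 1) ^ 2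
      - ((b 0 - a 0) * (c 0 - a 0) + (b 1 - a 1) * (c 1 - a 1))) = 0 := by
    linear_combination ((b 0 - a 0) * (c 0 - a 0) + (b 1 - a 1) * (c 1 - a 1)) * hc'
      - ((c 0 - a 0) ^ 2 + (c 1 - a 1) ^ 2) * hb'
      - 2 * ((c 0 - a 0) * (x 1 - a 1) - (c 1 - a 1) * (x 0 - a 0)) * h
  have hbc' : (b 0 - c 0) ^ 2 + (b 1 - c 1) ^ 2 = 0 := by
    linear_combination (mul_eq_zero.1 huv).resolve_left hu.ne'
      + (mul_eq_zero.1 hvu).resolve_left hv.ne'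
  obtain ⟨h0, h1⟩ := (add_eq_zero_iff_of_nonneg (sq_nonneg _) (sq_nonneg _)).1 hbc'
  exact hbc (ext_coords (sub_eq_zero.1 (pow_eq_zero_iff two_ne_zero |>.1 h0))
    (sub_eq_zero.1 (pow_eq_zero_iff two_ne_zero |>.1 h1)))

lemma eq_of_dist_eq_of_orient_pos {x y p q r s : Plane}
    (hx : dist x p = dist x q) (hy : dist y p = dist y q)
    (hxr : dist x r = dist x p) (hyr : dist y p ≤ dist y r)
    (hys : dist y s = dist y p) (hxs : dist x p ≤ dist x s)
    (hr : 0 < orient p q r) (hs : 0 < orient p q s) : x = y := by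
  have hx' := sq_eq_of_dist_eq hx
  have hy' := sq_eq_of_dist_eq hy
  have hxr' := sq_eq_of_dist_eq hxr
  have hys' := sq_eq_of_dist_eq hys
  have hyr' := sq_le_of_dist_le hyr
  have hxs' := sq_le_of_dist_le hxs
  unfold orient at hr hs
  -- `w = x - y` is orthogonal to `q - p`, with `w ⬝ (r - p) ≥ 0 ≥ w ⬝ (s - p)`; as `r` and `s` lie
  -- on the same side of `pq`, this forces `w ⬝ (r - p) = 0`, hence `w = 0`.
  have hwu : (x 0 - y 0) * (q 0 - p 0) + (x 1 - y 1) * (q 1 - p 1) = 0 := by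
    linear_combination (hx' - hy') / 2
  have hwr : 0 ≤ (x 0 - y 0) * (r 0 - p 0) + (x 1 - y 1) * (r 1 - p 1) := by
    linear_combination (hyr' + hxr') / 2
  have hws : (x 0 - y 0) * (s 0 - p 0) + (x 1 - y 1) * (s 1 - p 1) ≤ 0 := by
    linear_combination (hxs' + hys') / 2
  have hcross : ((x 0 - y 0) * (r 0 - p 0) + (x 1 - y 1) * (r 1 - p 1))
        * ((q 0 - p 0) * (s 1 - p 1) - (q 1 - p 1) * (s 0 - p 0))
      = ((x 0 - y 0) * (s 0 - p 0) + (x 1 - y 1) * (s 1 - p 1))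
        * ((q 0 - p 0) * (r 1 - p 1) - (q 1 - p 1) * (r 0 - p 0)) := by
    linear_combination ((r 0 - p 0) * (s 1 - p 1) - (r 1 - p 1) * (s 0 - p 0)) * hwu
  have hwr0 : (x 0 - y 0) * (r 0 - p 0) + (x 1 - y 1) * (r 1 - p 1) = 0 := by
    have := mul_nonpos_of_nonpos_of_nonneg hws hr.le
    exact le_antisymm (nonpos_of_mul_nonpos_left (hcross ▸ this) hs) hwr
  have h0 : (x 0 - y 0) * ((q 0 - p 0) * (r 1 - p 1) - (q 1 - p 1) * (r 0 - p 0)) = 0 := by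
    linear_combination (r 1 - p 1) * hwu - (q 1 - p 1) * hwr0
  have h1 : (x 1 - y 1) * ((q 0 - p 0) * (r 1 - p 1) - (q 1 - p 1) * (r 0 - p 0)) = 0 := by
    linear_combination (q 0 - p 0) * hwr0 - (r 0 - p 0) * hwu
  exact ext_coords (sub_eq_zero.1 ((mul_eq_zero.1 h0).resolve_right hr.ne'))
    (sub_eq_zero.1 ((mul_eq_zero.1 h1).resolve_right hr.ne'))

lemma orient_nonneg_of_div_le {p o q r : Plane} (hq : 0 < ⟪o - p, q - p⟫_ℝ)
    (hr : 0 < ⟪o - p, r - p⟫_ℝ)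
    (h : orient p o q / ⟪o - p, q - p⟫_ℝ ≤ orient p o r / ⟪o - p, r - p⟫_ℝ) :
    0 ≤ orient p q r := by
  have hop : o ≠ p := by
    rintro rfl
    simp at hq
  rw [div_le_div_iff₀ hq hr] at h
  have hn := pow_pos (dist_pos.2 hop) 2
  rw [dist_sq_eq] at hn
  simp only [inner_eq, PiLp.sub_apply] at h
  refine nonneg_of_mul_nonneg_right ?_ hn
  unfold orient at h ⊢
  linear_combination h

lemma orient_eq_zero_of_orient_eq_zero {p q a b c : Plane} (hpq : p ≠ q)
    (ha : orient p q a = 0) (hb : orient p q b = 0) (hc : orient p q c = 0) :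
    orient a b c = 0 := by
  unfold orient at *
  have h0 : (q 0 - p 0) * orient a b c = 0 := by
    unfold orient
    linear_combination (b 0 - a 0) * (hc - ha) - (c 0 - a 0) * (hb - ha)
  have h1 : (q 1 - p 1) * orient a b c = 0 := by
    unfold orient
    linear_combination (b 1 - a 1) * (hc - ha) - (c 1 - a 1) * (hb - ha)
  by_contra hne
  exact hpq (ext_coords (by linarith [(mul_eq_zero.1 h0).resolve_right hne])
    (by linarith [(mul_eq_zero.1 h1).resolve_right hne]))

def IsHullEdge (P : Set Plane) (e : Plane × Plane) : Prop :=
  e.1 ∈ P ∧ e.2 ∈ P ∧ e.1 ≠ e.2 ∧ ∀ r ∈ P, orient e.1 e.2 r ≤ 0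

lemma exists_hullEdges_of_farthest {P : Set Plane} (hP : P.Finite) {o p a b c : Plane}
    (hp : p ∈ P) (hfar : ∀ r ∈ P, dist o r ≤ dist o p)
    (ha : a ∈ P) (hb : b ∈ P) (hc : c ∈ P) (habc : orient a b c ≠ 0) :
    ∃ q q', q ≠ q' ∧ IsHullEdge P (q, p) ∧ IsHullEdge P (p, q') := by
  have hS : (P \ {p}).Nonempty := by
    by_cases hap : a = p
    · exact ⟨b, hb, fun hbp => (ne_of_orient_ne_zero habc).1 (hap.trans hbp.symm)⟩
    · exact ⟨a, ha, hap⟩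
  -- `P \ {p}` lies in the open half-plane `⟪o - p, · - p⟫ > 0`, where this ratio is monotone in
  -- the angle seen from `p`; its minimiser and maximiser are the hull neighbours of `p`.
  have hσ : ∀ d ∈ P \ {p}, ∀ e ∈ P \ {p},
      orient p o d / ⟪o - p, d - p⟫_ℝ ≤ orient p o e / ⟪o - p, e - p⟫_ℝ → 0 ≤ orient p d e :=
    fun d hd e he => orient_nonneg_of_div_le (inner_sub_pos_of_dist_le (hfar d hd.1) hd.2)
      (inner_sub_pos_of_dist_le (hfar e he.1) he.2)
  obtain ⟨q, hqS, hq⟩ := (P \ {p}).exists_min_image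
    (fun r => orient p o r / ⟪o - p, r - p⟫_ℝ) hP.sdiff hS
  obtain ⟨q', hq'S, hq'⟩ := (P \ {p}).exists_max_image
    (fun r => orient p o r / ⟪o - p, r - p⟫_ℝ) hP.sdiff hS
  have hin : ∀ r ∈ P, 0 ≤ orient p q r := by
    intro r hr
    by_cases hrp : r = p
    · simp [hrp]
    · exact hσ q hqS r ⟨hr, hrp⟩ (hq r ⟨hr, hrp⟩)
  have hout : ∀ r ∈ P, orient p q' r ≤ 0 := by
    intro r hr
    by_cases hrp : r = p
    · simp [hrp]
    · rw [← neg_nonneg, ← orient_swap_right]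
      exact hσ r ⟨hr, hrp⟩ q' hq'S (hq' r ⟨hr, hrp⟩)
  refine ⟨q, q', ?_, ⟨hqS.1, hp, hqS.2, fun r hr => ?_⟩,
    ⟨hp, hq'S.1, Ne.symm hq'S.2, hout⟩⟩
  · rintro rfl
    have hline : ∀ r ∈ P, orient p q r = 0 := fun r hr => le_antisymm (hout r hr) (hin r hr)
    exact habc (orient_eq_zero_of_orient_eq_zero (Ne.symm hqS.2) (hline a ha) (hline b hb)
      (hline c hc))
  · rw [orient_swap_left, neg_nonpos]
    exact hin r hr

lemma three_le_ncard_hullEdges {P : Set Plane} (hP : P.Finite) {a b c : Plane}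
    (ha : a ∈ P) (hb : b ∈ P) (hc : c ∈ P) (habc : orient a b c ≠ 0) :
    3 ≤ {e | IsHullEdge P e}.ncard := by
  obtain ⟨p, hp, hpfar⟩ := P.exists_max_image (dist a) hP ⟨a, ha⟩
  obtain ⟨p', hp', hp'far⟩ := P.exists_max_image (dist p) hP ⟨a, ha⟩
  have hpp' : p ≠ p' := by
    rintro rfl
    have hpa := dist_le_zero.1 (by simpa using hp'far a ha)
    have hpb := dist_le_zero.1 (by simpa using hp'far b hb)
    exact (ne_of_orient_ne_zero habc).1 (hpa.symm.trans hpb)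
  obtain ⟨q, q', hqq', hq, hq'⟩ := exists_hullEdges_of_farthest hP hp hpfar ha hb hc habc
  obtain ⟨w, w', -, hw, hw'⟩ := exists_hullEdges_of_farthest hP hp' hp'far ha hb hc habc
  obtain ⟨e, he, heq, heq'⟩ : ∃ e, IsHullEdge P e ∧ e ≠ (q, p) ∧ e ≠ (p, q') := by
    by_cases hp'q : p' = q
    · refine ⟨(w, p'), hw, ?_, ?_⟩ <;> simp only [ne_eq, Prod.mk.injEq, not_and]
      · exact fun _ => hpp'.symm
      · exact fun _ hp'q' => hqq' (hp'q.symm.trans hp'q')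
    · exact ⟨(p', w'), hw', by simp [hp'q], by simp [hpp'.symm]⟩
  have hfin : {e | IsHullEdge P e}.Finite := (hP.prod hP).subset fun e he => ⟨he.1, he.2.1⟩
  calc 3 = ({(q, p), (p, q'), e} : Set (Plane × Plane)).ncard := by
        refine (ncard_eq_three.2 ⟨_, _, _, ?_, heq.symm, heq'.symm, rfl⟩).symm
        simp [hq.2.2.1]
    _ ≤ {e | IsHullEdge P e}.ncard := by
        refine ncard_le_ncard ?_ hfin
        simp [insert_subset_iff, hq, hq', he]

lemma dist_eq_of_mem_nearest {P : Set Plane} {x p q : Plane}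
    (hp : p ∈ nearest P x) (hq : q ∈ nearest P x) : dist x p = dist x q :=
  le_antisymm (hp.2 q hq.1) (hq.2 p hp.1)

lemma exists_orient_pos_of_mem_vtx {P : Set Plane} (hP : P.Finite) {x : Plane}
    (hx : x ∈ vtx P) :
    ∃ a ∈ nearest P x, ∃ b ∈ nearest P x, ∃ c ∈ nearest P x, 0 < orient a b c := by
  have hfin : (nearest P x).Finite := hP.subset fun _ hp => hp.1
  have h3 : 2 < (nearest P x).ncard := by
    have : (3 : ℕ∞) ≤ (nearest P x).ncard := hfin.cast_ncard_eq ▸ hx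
    exact_mod_cast this
  obtain ⟨a, b, c, ha, hb, hc, hab, hac, hbc⟩ := (two_lt_ncard_iff hfin).1 h3
  have habc := orient_ne_zero_of_dist_eq hab hac hbc
    (dist_eq_of_mem_nearest ha hb) (dist_eq_of_mem_nearest ha hc)
  rcases habc.lt_or_gt with hneg | hpos
  · exact ⟨b, hb, a, ha, c, hc, by rw [orient_swap_left]; linarith⟩
  · exact ⟨a, ha, b, hb, c, hc, hpos⟩

def darts (P : Set Plane) (x : Plane) : Set (Plane × Plane) :=
  {e | e.1 ∈ nearest P x ∧ e.2 ∈ nearest P x ∧ ∃ r ∈ nearest P x, 0 < orient e.1 e.2 r}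

lemma darts_subset_offDiag (P : Set Plane) (x : Plane) : darts P x ⊆ P.offDiag := by
  rintro e ⟨hu, hv, r, -, hr⟩
  refine ⟨hu.1, hv.1, fun huv => ?_⟩
  rw [huv] at hr
  simp at hr

lemma three_le_ncard_darts {P : Set Plane} (hP : P.Finite) {x : Plane} (hx : x ∈ vtx P) :
    3 ≤ (darts P x).ncard := by
  obtain ⟨a, ha, b, hb, c, hc, habc⟩ := exists_orient_pos_of_mem_vtx hP hx
  obtain ⟨hab, hac, hbc⟩ := ne_of_orient_ne_zero habc.ne'
  have hsub : ({(a, b), (b, c), (c, a)} : Set (Plane × Plane)) ⊆ darts P x := by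
    simp only [insert_subset_iff, singleton_subset_iff]
    exact ⟨⟨ha, hb, c, hc, habc⟩, ⟨hb, hc, a, ha, by rwa [orient_rotate]⟩,
      ⟨hc, ha, b, hb, by rwa [orient_rotate, orient_rotate]⟩⟩
  calc 3 = ({(a, b), (b, c), (c, a)} : Set (Plane × Plane)).ncard := by
        refine (ncard_eq_three.2 ⟨_, _, _, ?_, ?_, ?_, rfl⟩).symm <;>
          simp [hab, hac, hbc, hab.symm, hac.symm]
    _ ≤ (darts P x).ncard := ncard_le_ncard hsub ((hP.offDiag).subset (darts_subset_offDiag P x))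

lemma eq_of_mem_darts {P : Set Plane} {x y : Plane} {e : Plane × Plane}
    (hx : e ∈ darts P x) (hy : e ∈ darts P y) : x = y := by
  obtain ⟨hux, hvx, r, hrx, hr⟩ := hx
  obtain ⟨huy, hvy, s, hsy, hs⟩ := hy
  exact eq_of_dist_eq_of_orient_pos (dist_eq_of_mem_nearest hux hvx)
    (dist_eq_of_mem_nearest huy hvy) (dist_eq_of_mem_nearest hrx hux) (huy.2 r hrx.1)
    (dist_eq_of_mem_nearest hsy huy) (hux.2 s hsy.1) hr hs

lemma not_isHullEdge_of_mem_darts {P : Set Plane} {x : Plane} {e : Plane × Plane}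
    (he : e ∈ darts P x) : ¬IsHullEdge P e := by
  obtain ⟨-, -, r, hr, hpos⟩ := he
  exact fun hull => (hull.2.2.2 r hr.1).not_gt hpos

theorem three_mul_ncard_vtx_add_ncard_hullEdges_le {P : Set Plane} (hP : P.Finite)
    (hV : (vtx P).Finite) :
    3 * (vtx P).ncard + {e | IsHullEdge P e}.ncard ≤ P.ncard * P.ncard - P.ncard := by
  classical
  have hhull : {e | IsHullEdge P e} = ↑(hP.toFinset.offDiag.filter (IsHullEdge P)) := by
    ext e
    rw [Finset.coe_filter]
    exact ⟨fun h => ⟨Finset.mem_offDiag.2 ⟨(Finite.mem_toFinset hP).2 h.1,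
      (Finite.mem_toFinset hP).2 h.2.1, h.2.2.1⟩, h⟩, fun h => h.2⟩
  have hcount : hV.toFinset.card * 3
      ≤ (hP.toFinset.offDiag.filter fun e => ¬IsHullEdge P e).card * 1 := by
    refine Finset.card_mul_le_card_mul (fun x e => e ∈ darts P x) (fun x hx => ?_)
      (fun e _ => Finset.card_le_one.2 fun x hx y hy => ?_)
    · refine (three_le_ncard_darts hP ((Finite.mem_toFinset hV).1 hx)).trans ?_
      rw [← ncard_coe_finset]
      refine ncard_le_ncard (fun e he => ?_) (Finset.finite_toSet _)
      have hoff := darts_subset_offDiag P x he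
      rw [Finset.mem_coe, Finset.mem_bipartiteAbove, Finset.mem_filter, Finset.mem_offDiag,
        Finite.mem_toFinset, Finite.mem_toFinset]
      exact ⟨⟨hoff, not_isHullEdge_of_mem_darts he⟩, he⟩
    · exact eq_of_mem_darts ((Finset.mem_bipartiteBelow _).1 hx).2
        ((Finset.mem_bipartiteBelow _).1 hy).2
  have hsplit := Finset.card_filter_add_card_filter_not (s := hP.toFinset.offDiag) (IsHullEdge P)
  rw [Finset.offDiag_card] at hsplit
  rw [ncard_eq_toFinset_card _ hP, ncard_eq_toFinset_card _ hV, hhull, ncard_coe_finset]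
  omega

end Plane

open Plane

theorem growth_needs_more_than_five (P : Set Plane) (hP : P.Finite)
    (h : P.ncard < (vtx P).ncard) : 5 < P.ncard := by
  have hV : (vtx P).Finite := finite_of_ncard_pos (by omega)
  obtain ⟨x, hx⟩ := nonempty_of_ncard_ne_zero (by omega : (vtx P).ncard ≠ 0)
  obtain ⟨a, ha, b, hb, c, hc, habc⟩ := exists_orient_pos_of_mem_vtx hP hx
  have hhull := three_le_ncard_hullEdges hP ha.1 hb.1 hc.1 habc.ne'
  have hcount := three_mul_ncard_vtx_add_ncard_hullEdges_le hP hV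
  by_contra! hn
  have : P.ncard * P.ncard ≤ 5 * P.ncard := Nat.mul_le_mul_right _ hn
  omega
end

section
/- Let P be a finite subset of the Euclidean plane ℝ², let x ∈ 𝒱(P) be a Voronoi vertex, and let p ∈ P be such that x ∈ V_P(p). Then x is an extreme point of the convex set V_P(p). (This expresses that the interior angle of the Voronoi polygon V_P(p) at any of its vertices is strictly less than π.) -/
open Set

/-! If `x` lies in `V_P(p)` and has two further nearest generators `q ≠ r`, then `x` lies on the
bisectors of `p, q` and of `p, r`. Each bisector cuts an extreme subset out of the cell, because
`dist z q ^ 2 - dist z p ^ 2` is affine in `z` and nonnegative on the cell. Their intersection is an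
extreme subset containing `x`, and it is `{x}`: in the plane, two distinct points cannot both be
equidistant from three distinct points. -/

lemma Set.nontrivial_sdiff_singleton_of_three_le_encard {α : Type*} {s : Set α} (a : α)
    (hs : 3 ≤ s.encard) : (s \ {a}).Nontrivial := by
  rw [← one_lt_encard_iff_nontrivial]
  calc (1 : ℕ∞) < 3 - 1 := by decide
    _ ≤ s.encard - 1 := tsub_le_tsub_right hs 1
    _ ≤ (s \ {a}).encard := encard_tsub_one_le_encard_sdiff_singleton s a

section InnerProductSpace

variable {E : Type*} [NormedAddCommGroup E] [InnerProductSpace ℝ E]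

lemma dist_sq_sub_dist_sq_eq_inner (z p s : E) :
    dist z s ^ 2 - dist z p ^ 2 = 2 * inner ℝ z (p - s) + (‖s‖ ^ 2 - ‖p‖ ^ 2) := by
  rw [dist_eq_norm, dist_eq_norm, norm_sub_sq_real, norm_sub_sq_real, inner_sub_right]
  ring

lemma isExtreme_inter_setOf_dist_eq {A : Set E} {p s : E} (hA : ∀ z ∈ A, dist z p ≤ dist z s) :
    IsExtreme ℝ A (A ∩ {z | dist z p = dist z s}) := by
  refine ⟨inter_subset_left, fun x₁ hx₁ x₂ hx₂ z ⟨_, hz⟩ ⟨a, b, ha, hb, hab, hzab⟩ => ⟨hx₁, ?_⟩⟩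
  let g : E → ℝ := fun z => dist z s ^ 2 - dist z p ^ 2
  have hg_combo : g (a • x₁ + b • x₂) = a * g x₁ + b * g x₂ := by
    simp only [g, dist_sq_sub_dist_sq_eq_inner, inner_add_left, real_inner_smul_left]
    linear_combination (‖s‖ ^ 2 - ‖p‖ ^ 2) * hab.symm
  have hg_nonneg : ∀ y ∈ A, 0 ≤ g y := fun y hy =>
    sub_nonneg.2 (pow_le_pow_left₀ dist_nonneg (hA y hy) 2)
  have hgz : g z = 0 := sub_eq_zero.2 (by rw [show dist z p = dist z s from hz])
  rw [← hzab, hg_combo] at hgz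
  have hgx₁ : g x₁ = 0 := by nlinarith [hg_nonneg x₁ hx₁, hg_nonneg x₂ hx₂]
  exact (pow_left_inj₀ dist_nonneg dist_nonneg two_ne_zero).1 (sub_eq_zero.1 hgx₁).symm

end InnerProductSpace

open EuclideanGeometry Module in
lemma subsingleton_setOf_dist_eq_dist_eq {V P : Type*} [NormedAddCommGroup V]
    [InnerProductSpace ℝ V] [MetricSpace P] [NormedAddTorsor V P] (hd : finrank ℝ V = 2)
    {p q r : P} (hqp : q ≠ p) (hrp : r ≠ p) (hqr : q ≠ r) :
    {z | dist z p = dist z q ∧ dist z p = dist z r}.Subsingleton := by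
  have : FiniteDimensional ℝ V := Module.finite_of_finrank_eq_succ hd
  intro z₁ ⟨hz₁q, hz₁r⟩ z₂ ⟨hz₂q, hz₂r⟩
  by_contra hz
  simp only [dist_comm z₁, dist_comm z₂] at hz₁q hz₁r hz₂q hz₂r
  rcases eq_of_dist_eq_of_dist_eq_of_finrank_eq_two hd hz hqp.symm rfl hz₁q.symm hz₁r.symm rfl
    hz₂q.symm hz₂r.symm with h | h
  exacts [hrp h, hqr h.symm]

lemma dist_eq_of_mem_cell_of_mem_nearest {P : Set Plane} {p q x : Plane} (hp : p ∈ P)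
    (hx : x ∈ cell P p) (hq : q ∈ nearest P x) : dist x p = dist x q :=
  le_antisymm (hx q hq.1) (hq.2 p hp)

theorem vertex_is_extreme_point_general (P : Set Plane)
    (x : Plane) (hx : x ∈ vtx P) (p : Plane) (hp : p ∈ P) (hxp : x ∈ cell P p) :
    x ∈ Set.extremePoints ℝ (cell P p) := by
  obtain ⟨q, ⟨hq, hqp⟩, r, ⟨hr, hrp⟩, hqr⟩ :=
    Set.nontrivial_sdiff_singleton_of_three_le_encard p hx
  have hface := (isExtreme_inter_setOf_dist_eq (A := cell P p) fun z hz => hz q hq.1).inter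
    (isExtreme_inter_setOf_dist_eq (A := cell P p) fun z hz => hz r hr.1)
  have hface_eq :
      cell P p ∩ {z | dist z p = dist z q} ∩ (cell P p ∩ {z | dist z p = dist z r}) = {x} := by
    refine Subsingleton.eq_singleton_of_mem ?_
      ⟨⟨hxp, dist_eq_of_mem_cell_of_mem_nearest hp hxp hq⟩,
        ⟨hxp, dist_eq_of_mem_cell_of_mem_nearest hp hxp hr⟩⟩
    exact (subsingleton_setOf_dist_eq_dist_eq finrank_euclideanSpace_fin hqp hrp hqr).anti
      fun z hz => ⟨hz.1.2, hz.2.2⟩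
  rwa [hface_eq, isExtreme_singleton] at hface

theorem vertex_is_extreme_point (P : Set Plane) (hP : P.Finite)
    (x : Plane) (hx : x ∈ vtx P) (p : Plane) (hp : p ∈ P) (hxp : x ∈ cell P p) :
    x ∈ Set.extremePoints ℝ (cell P p) :=
  vertex_is_extreme_point_general P x hx p hp hxp
end

section
/- Let P ⊆ ℝ² be the integer square lattice, P = {x ∈ ℝ² : x 0 ∈ range (Int.cast : ℤ → ℝ) ∧ x 1 ∈ range (Int.cast : ℤ → ℝ)}. Then the Voronoi vertex set of P is the shifted lattice: 𝒱(P) = {x ∈ ℝ² : x 0 − 1/2 ∈ range (Int.cast : ℤ → ℝ) ∧ x 1 − 1/2 ∈ range (Int.cast : ℤ → ℝ)}. In particular, the square lattice is a fixed point of Voronoi iteration up to translation. -/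
/-!
Squared distance from `x` to a lattice point splits as a sum over the two coordinates, so the
nearest lattice points to `x` are exactly the pairs `(a, b)` with `a` a nearest integer to `x 0`
and `b` a nearest integer to `x 1`. A real `t` has two nearest integers when `t - 1/2` is an
integer and one otherwise, so `x` has four nearest lattice points when both coordinates are
half-integers and at most two otherwise.
-/

open Set

-- Exactly the integers nearest to `t`, by `mem_nearInts_iff_forall_abs_sub_le`.
def nearInts (t : ℝ) : Set ℤ := {n | |t - n| ≤ 1 / 2}

lemma mem_nearInts_iff_forall_abs_sub_le {t : ℝ} {n : ℤ} :
    n ∈ nearInts t ↔ ∀ m : ℤ, |t - n| ≤ |t - m| := by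
  refine ⟨fun hn m => ?_, fun h => (h (round t)).trans (abs_sub_round t)⟩
  rcases eq_or_ne m n with rfl | hmn
  · rfl
  have h1 : (1 : ℝ) ≤ |(n : ℝ) - m| := by
    exact_mod_cast Int.one_le_abs (sub_ne_zero.mpr hmn.symm)
  have h2 := abs_sub_le (n : ℝ) t m
  simp only [nearInts, mem_ofPred_eq] at hn
  linarith [abs_sub_comm (n : ℝ) t]

lemma mem_nearInts_iff_forall_sq_le {t : ℝ} {n : ℤ} :
    n ∈ nearInts t ↔ ∀ m : ℤ, (t - n) ^ 2 ≤ (t - m) ^ 2 := by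
  simp only [mem_nearInts_iff_forall_abs_sub_le, sq_le_sq]

lemma nearInts_int_add_half (b : ℤ) : nearInts (b + 1 / 2) = {b, b + 1} := by
  ext n
  simp only [nearInts, mem_ofPred_eq, mem_insert_iff, mem_singleton_iff, abs_le]
  constructor
  · rintro ⟨h1, h2⟩
    have : b ≤ n := by exact_mod_cast (by linarith : (b : ℝ) ≤ n)
    have : n ≤ b + 1 := by exact_mod_cast (by linarith : (n : ℝ) ≤ b + 1)
    omega
  · rintro (rfl | rfl) <;> push_cast <;> constructor <;> linarith

lemma sub_half_mem_range_of_nearInts_nontrivial {t : ℝ} (h : (nearInts t).Nontrivial) :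
    t - 1 / 2 ∈ range (Int.cast : ℤ → ℝ) := by
  obtain ⟨m, hm, n, hn, hlt⟩ := h.exists_lt
  simp only [nearInts, mem_ofPred_eq, abs_le] at hm hn
  have : n ≤ m + 1 := by exact_mod_cast (by linarith : (n : ℝ) ≤ m + 1)
  have hn' : n = m + 1 := by omega
  subst hn'
  push_cast at hn
  exact ⟨m, by linarith⟩

lemma encard_nearInts_le_one {t : ℝ} (h : t - 1 / 2 ∉ range (Int.cast : ℤ → ℝ)) :
    (nearInts t).encard ≤ 1 :=
  encard_le_one_iff_subsingleton.mpr
    (not_nontrivial_iff.mp (mt sub_half_mem_range_of_nearInts_nontrivial h))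

lemma encard_nearInts_le_two (t : ℝ) : (nearInts t).encard ≤ 2 := by
  by_cases h : t - 1 / 2 ∈ range (Int.cast : ℤ → ℝ)
  · obtain ⟨b, hb⟩ := h
    rw [show t = b + 1 / 2 by linarith, nearInts_int_add_half,
      encard_pair (by omega)]
  · exact (encard_nearInts_le_one h).trans (by norm_num)

def squareLattice : Set Plane :=
  {x : Plane | x 0 ∈ range (Int.cast : ℤ → ℝ) ∧ x 1 ∈ range (Int.cast : ℤ → ℝ)}

lemma dist_le_dist_iff_sq (x p q : Plane) :
    dist x p ≤ dist x q ↔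
      (x 0 - p 0) ^ 2 + (x 1 - p 1) ^ 2 ≤ (x 0 - q 0) ^ 2 + (x 1 - q 1) ^ 2 := by
  rw [EuclideanSpace.dist_eq, EuclideanSpace.dist_eq, Real.sqrt_le_sqrt_iff (by positivity)]
  simp [Fin.sum_univ_two, Real.dist_eq, sq_abs]

lemma nearest_squareLattice (x : Plane) :
    nearest squareLattice x =
      (fun ab : ℤ × ℤ => !₂[(ab.1 : ℝ), ab.2]) '' (nearInts (x 0) ×ˢ nearInts (x 1)) := by
  ext p
  simp only [nearest, squareLattice]
  constructor
  · rintro ⟨⟨⟨a, ha⟩, ⟨b, hb⟩⟩, hp⟩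
    refine ⟨(a, b), ⟨mem_nearInts_iff_forall_sq_le.mpr fun m => ?_,
      mem_nearInts_iff_forall_sq_le.mpr fun m => ?_⟩, ?_⟩
    · have := (dist_le_dist_iff_sq x p !₂[(m : ℝ), b]).mp (hp _ ⟨⟨m, rfl⟩, ⟨b, rfl⟩⟩)
      simp_all
    · have := (dist_le_dist_iff_sq x p !₂[(a : ℝ), m]).mp (hp _ ⟨⟨a, rfl⟩, ⟨m, rfl⟩⟩)
      simp_all
    · ext i; fin_cases i <;> simp [ha, hb]
  · rintro ⟨⟨a, b⟩, ⟨ha, hb⟩, rfl⟩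
    refine ⟨⟨⟨a, rfl⟩, ⟨b, rfl⟩⟩, ?_⟩
    rintro q ⟨⟨m, hm⟩, ⟨k, hk⟩⟩
    rw [dist_le_dist_iff_sq, ← hm, ← hk]
    simpa using add_le_add (mem_nearInts_iff_forall_sq_le.mp ha m)
      (mem_nearInts_iff_forall_sq_le.mp hb k)

lemma encard_nearest_squareLattice (x : Plane) :
    (nearest squareLattice x).encard = (nearInts (x 0)).encard * (nearInts (x 1)).encard := by
  rw [nearest_squareLattice, Function.Injective.encard_image, encard_prod]
  rintro ⟨a, b⟩ ⟨c, d⟩ h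
  have h0 : (a : ℝ) = c := by simpa using congrArg (· 0) h
  have h1 : (b : ℝ) = d := by simpa using congrArg (· 1) h
  rw [Int.cast_inj] at h0 h1
  rw [h0, h1]

theorem vtx_squareLattice :
    vtx squareLattice =
      {x : Plane | x 0 - 1 / 2 ∈ range (Int.cast : ℤ → ℝ) ∧
        x 1 - 1 / 2 ∈ range (Int.cast : ℤ → ℝ)} := by
  ext x
  simp only [vtx, mem_ofPred_eq, encard_nearest_squareLattice]
  constructor
  · intro h
    by_contra hx
    rw [not_and_or] at hx
    have : (nearInts (x 0)).encard * (nearInts (x 1)).encard ≤ 2 := by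
      rcases hx with h0 | h1
      · simpa using mul_le_mul' (encard_nearInts_le_one h0) (encard_nearInts_le_two (x 1))
      · simpa using mul_le_mul' (encard_nearInts_le_two (x 0)) (encard_nearInts_le_one h1)
    exact absurd (h.trans this) (by norm_num)
  · rintro ⟨⟨a, ha⟩, ⟨b, hb⟩⟩
    rw [show x 0 = a + 1 / 2 by linarith, show x 1 = b + 1 / 2 by linarith,
      nearInts_int_add_half, nearInts_int_add_half, encard_pair (by omega),
      encard_pair (by omega)]
    norm_num

theorem square_lattice_vtx :
    vtx {x : Plane | x 0 ∈ Set.range (Int.cast : ℤ → ℝ) ∧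
        x 1 ∈ Set.range (Int.cast : ℤ → ℝ)} =
      {x : Plane | x 0 - 1/2 ∈ Set.range (Int.cast : ℤ → ℝ) ∧
        x 1 - 1/2 ∈ Set.range (Int.cast : ℤ → ℝ)} :=
  vtx_squareLattice
end
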